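/- arXiv:math/0404081 — 4 statements merged into one kernel-verified Lean document; each statement's English description precedes it below -/
import Mathlib

section
/- With respect to the natural inner product on double forms, the adjoint of multiplication by g is the contraction map c: for all double forms ω1, ω2, one has ⟨gω1, ω2⟩ = ⟨ω1, cω2⟩. -/
open scoped BigOperators

namespace DoubleForm

/-- The model Euclidean vector space of dimension `n` (with the standard inner product). -/
abbrev V (n : ℕ) := Fin n → ℝ

/-- The standard orthonormal basis of `V n`. -/
def E (n : ℕ) (j : Fin n) : V n := fun k => if k = j then 1 else 0

/-- Raw double forms of bidegree `(p,q)`: real valued functions of `p` vectors and `q` vectors.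
Genuine double forms are singled out by `IsDF`. -/
abbrev DF (n p q : ℕ) := (Fin p → V n) → (Fin q → V n) → ℝ

/-- `ω` is a genuine double form: multilinear and alternating in the first `p`
and in the last `q` arguments. -/
def IsDF {n p q : ℕ} (ω : DF n p q) : Prop :=
  ∃ F : AlternatingMap ℝ (V n) (AlternatingMap ℝ (V n) ℝ (Fin q)) (Fin p),
    ∀ x y, ω x y = F x y

/-- Transport of double forms along equalities of the degrees. -/
def DFcast {n p q p' q' : ℕ} (h1 : p = p') (h2 : q = q') (ω : DF n p q) : DF n p' q' :=
  fun x y => ω (fun i => x (Fin.cast h1 i)) (fun j => y (Fin.cast h2 j))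

/-- The product of double forms (Kulkarni's product). -/
noncomputable def mul {n p q r s : ℕ} (ω : DF n p q) (η : DF n r s) :
    DF n (p + r) (q + s) := fun x y =>
  (((p.factorial * r.factorial * q.factorial * s.factorial : ℕ) : ℝ))⁻¹ *
    ∑ σ : Equiv.Perm (Fin (p + r)), ∑ ρ : Equiv.Perm (Fin (q + s)),
      ((Equiv.Perm.sign σ : ℤ) : ℝ) * ((Equiv.Perm.sign ρ : ℤ) : ℝ) *
        ω (fun i => x (σ (Fin.castAdd r i))) (fun j => y (ρ (Fin.castAdd s j))) *
        η (fun i => x (σ (Fin.natAdd p i))) (fun j => y (ρ (Fin.natAdd q j)))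

/-- The metric `g` as a double form of bidegree `(1,1)`. -/
noncomputable def gm (n : ℕ) : DF n 1 1 := fun x y => ∑ j : Fin n, x 0 j * y 0 j

/-- Powers `g^l` of the metric in the algebra of double forms. -/
noncomputable def gpow (n : ℕ) : (l : ℕ) → DF n l l
  | 0 => fun _ _ => 1
  | l + 1 => mul (gpow n l) (gm n)

/-- The contraction map `c : D^{p,q} → D^{p-1,q-1}` (zero if `p = 0` or `q = 0`). -/
noncomputable def contr {n : ℕ} : ∀ {p q : ℕ}, DF n p q → DF n (p - 1) (q - 1)
  | p + 1, q + 1, ω => fun x y =>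
      ∑ j : Fin n, ω (Fin.cons (E n j) x) (Fin.cons (E n j) y)
  | 0, _, _ => 0
  | _ + 1, 0, _ => 0

/-- Iterated contraction `c^k`. -/
noncomputable def ck {n : ℕ} : ∀ (k : ℕ) {p q : ℕ}, DF n p q → DF n (p - k) (q - k)
  | 0, _, _, ω => ω
  | k + 1, _, _, ω => contr (ck k ω)

/-- The natural inner product on `D^{p,q}`. -/
noncomputable def innerDF {n p q : ℕ} (ω θ : DF n p q) : ℝ :=
  (((p.factorial * q.factorial : ℕ) : ℝ))⁻¹ *
    ∑ f : Fin p → Fin n, ∑ g : Fin q → Fin n,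
      ω (fun i => E n (f i)) (fun j => E n (g j)) *
        θ (fun i => E n (f i)) (fun j => E n (g j))

/-- The natural inner product extended to all bidegrees: distinct bidegrees are orthogonal. -/
noncomputable def innerDF2 {n p q r s : ℕ} (ω : DF n p q) (θ : DF n r s) : ℝ :=
  if h : p = r ∧ q = s then innerDF (DFcast h.1 h.2 ω) θ else 0

/-- Determinant of the `n × n` matrix whose first `p` rows are the basis vectors `E (f i)`
and whose remaining rows are the vectors `x`. -/
noncomputable def rowsDet {n : ℕ} (p : ℕ) (f : Fin p → Fin n) (x : Fin (n - p) → V n) : ℝ :=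
  Matrix.det (Matrix.of fun i k : Fin n =>
    if h : (i : ℕ) < p then E n (f ⟨(i : ℕ), h⟩) k
    else x ⟨(i : ℕ) - p, by have := i.isLt; omega⟩ k)

/-- The Hodge star operator extended to double forms, `D^{p,q} → D^{n-p,n-q}`. -/
noncomputable def hstar {n p q : ℕ} (ω : DF n p q) : DF n (n - p) (n - q) := fun x y =>
  (((p.factorial * q.factorial : ℕ) : ℝ))⁻¹ *
    ∑ f : Fin p → Fin n, ∑ g : Fin q → Fin n,
      ω (fun i => E n (f i)) (fun j => E n (g j)) * rowsDet p f x * rowsDet q g y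

/-- The first Bianchi sum `B : D^{p,q} → D^{p+1,q-1}` (zero if `q = 0`). -/
noncomputable def bianchi {n : ℕ} : ∀ {p q : ℕ}, DF n p q → DF n (p + 1) (q - 1)
  | p, q + 1, ω => fun x y =>
      ∑ j : Fin (p + 1), (-1 : ℝ) ^ ((j : ℕ) + 1) *
        ω (fun i => x (j.succAbove i)) (Fin.cons (x j) y)
  | _, 0, _ => 0

/-- Symmetric double forms of bidegree `(p,p)`. -/
def IsSymm {n p : ℕ} (ω : DF n p p) : Prop := ∀ x y, ω x y = ω y x

/-- The total (bigraded) space of double forms. -/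
abbrev DT (n : ℕ) := ∀ p q : ℕ, DF n p q

/-- Embedding of the component `D^{p,q}` into the total space. -/
noncomputable def emb {n : ℕ} (p q : ℕ) (ω : DF n p q) : DT n := fun p' q' =>
  if h : p = p' ∧ q = q' then DFcast h.1 h.2 ω else 0

/-!
Since `ω₂` is alternating in both arguments, the antisymmetrisation built into the product
`g ω₁` can be absorbed into `ω₂`: every one of the `(p+1)! (q+1)!` signed permutation terms
contributes the same sum, and their number cancels the normalisation of the inner product.
What remains is `∑ g(e_k, e_k') ω₁(e_I, e_J) ω₂(e_k e_I, e_k' e_J)` over all indices, and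
`g(e_k, e_k') = δ_kk'` turns the sum over `k, k'` into the contraction of `ω₂`.
-/

open Finset
open Equiv (Perm)

theorem Int.cast_units_mul_self {R : Type*} [Ring R] (u : ℤˣ) :
    ((u : ℤ) : R) * ((u : ℤ) : R) = 1 := by
  rw [← Int.cast_mul, ← Units.val_mul, Int.units_mul_self, Units.val_one, Int.cast_one]

theorem IsDF.apply_comp_perm {n p q : ℕ} {ω : DF n p q} (hω : IsDF ω) (x : Fin p → V n)
    (y : Fin q → V n) (σ : Perm (Fin p)) (ρ : Perm (Fin q)) :
    ω (x ∘ σ) (y ∘ ρ) = ((Perm.sign σ : ℤ) : ℝ) * ((Perm.sign ρ : ℤ) : ℝ) * ω x y := by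
  obtain ⟨F, hF⟩ := hω
  rw [hF, hF, F.map_perm x σ, AlternatingMap.smul_apply, AlternatingMap.map_perm]
  simp only [Units.smul_def, zsmul_eq_mul]
  ring

theorem IsDF.cast {n p q p' q' : ℕ} {ω : DF n p q} (hω : IsDF ω) (h1 : p = p') (h2 : q = q') :
    IsDF (DFcast h1 h2 ω) := by
  subst h1 h2
  exact hω

theorem innerDF_cast {n p q p' q' : ℕ} (h1 : p = p') (h2 : q = q') (ω : DF n p q)
    (θ : DF n p' q') : innerDF (DFcast h1 h2 ω) θ = innerDF ω (DFcast h1.symm h2.symm θ) := by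
  subst h1 h2
  rfl

theorem sum_sum_alternatization_mul_of_alternating {α : Type*} [Fintype α] [DecidableEq α]
    {m k : ℕ} (A G : (Fin m → α) → (Fin k → α) → ℝ)
    (hG : ∀ f g (σ : Perm (Fin m)) (ρ : Perm (Fin k)),
      G (f ∘ σ) (g ∘ ρ) = ((Perm.sign σ : ℤ) : ℝ) * ((Perm.sign ρ : ℤ) : ℝ) * G f g) :
    ∑ f, ∑ g, (∑ σ : Perm (Fin m), ∑ ρ : Perm (Fin k),
        ((Perm.sign σ : ℤ) : ℝ) * ((Perm.sign ρ : ℤ) : ℝ) * A (f ∘ σ) (g ∘ ρ)) * G f g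
      = m.factorial * k.factorial * ∑ f, ∑ g, A f g * G f g := by
  have h_perm : ∀ σ ρ, ∑ f, ∑ g, ((Perm.sign σ : ℤ) : ℝ) * ((Perm.sign ρ : ℤ) : ℝ) *
      A (f ∘ σ) (g ∘ ρ) * G f g = ∑ f, ∑ g, A f g * G f g := by
    intro σ ρ
    rw [← (σ.arrowCongr (Equiv.refl α)).sum_comp]
    refine sum_congr rfl fun f _ => ?_
    rw [← (ρ.arrowCongr (Equiv.refl α)).sum_comp]
    refine sum_congr rfl fun g _ => ?_
    have hσ : σ.arrowCongr (Equiv.refl α) f = f ∘ σ.symm := rfl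
    have hρ : ρ.arrowCongr (Equiv.refl α) g = g ∘ ρ.symm := rfl
    rw [hσ, hρ, hG, Function.comp_assoc, Function.comp_assoc, Equiv.symm_comp_self,
      Equiv.symm_comp_self, Function.comp_id, Function.comp_id, Perm.sign_symm, Perm.sign_symm]
    linear_combination
      A f g * G f g * ((Perm.sign ρ : ℤ) : ℝ) ^ 2 * Int.cast_units_mul_self (R := ℝ) (Perm.sign σ) +
        A f g * G f g * Int.cast_units_mul_self (R := ℝ) (Perm.sign ρ)
  simp only [sum_mul]
  simp_rw [sum_comm (s := (univ : Finset (Fin m → α))),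
    sum_comm (s := (univ : Finset (Fin k → α)))]
  simp only [h_perm, sum_const, card_univ, Fintype.card_perm, Fintype.card_fin, nsmul_eq_mul]
  ring

theorem innerDF_mul {n p q r s : ℕ} (ω : DF n p q) (η : DF n r s) {θ : DF n (p + r) (q + s)}
    (hθ : IsDF θ) :
    innerDF (mul ω η) θ = ((p.factorial * r.factorial * q.factorial * s.factorial : ℕ) : ℝ)⁻¹ *
      ∑ f : Fin (p + r) → Fin n, ∑ g : Fin (q + s) → Fin n,
        ω (fun i => E n (f (Fin.castAdd r i))) (fun j => E n (g (Fin.castAdd s j))) *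
          η (fun i => E n (f (Fin.natAdd p i))) (fun j => E n (g (Fin.natAdd q j))) *
          θ (fun i => E n (f i)) (fun j => E n (g j)) := by
  have key := sum_sum_alternatization_mul_of_alternating
    (fun f g => ω (fun i => E n (f (Fin.castAdd r i))) (fun j => E n (g (Fin.castAdd s j))) *
      η (fun i => E n (f (Fin.natAdd p i))) (fun j => E n (g (Fin.natAdd q j))))
    (fun f g => θ (fun i => E n (f i)) (fun j => E n (g j)))
    (fun f g σ ρ => hθ.apply_comp_perm (fun i => E n (f i)) (fun j => E n (g j)) σ ρ)
  simp only [innerDF, mul, mul_assoc, Function.comp_apply, ← mul_sum] at key ⊢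
  rw [key, Nat.cast_mul]
  field_simp

theorem sum_fun_fin_one_add {α M : Type*} [Fintype α] [AddCommMonoid M] {p : ℕ}
    (F : (Fin (1 + p) → α) → M) :
    ∑ f, F f = ∑ k : α, ∑ f : Fin p → α, F (Fin.append (fun _ => k) f) := by
  rw [← (Fin.appendEquiv 1 p).sum_comp, Fintype.sum_prod_type,
    ← (Equiv.funUnique (Fin 1) α).symm.sum_comp]
  rfl

theorem comp_append_cast_eq_cons {α β : Type*} {p : ℕ} (φ : α → β) (k : α) (f : Fin p → α)
    (h : p + 1 = 1 + p) :
    (fun i => φ (Fin.append (fun _ : Fin 1 => k) f (Fin.cast h i))) =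
      Fin.cons (φ k) (fun i => φ (f i)) := by
  funext i
  rw [Fin.append_left_eq_cons, Function.comp_apply, Fin.cast_cast, Fin.cast_eq_self]
  exact congrFun (Fin.comp_cons φ k f) i

theorem gm_E (n : ℕ) (k k' : Fin n) :
    gm n (fun _ => E n k) (fun _ => E n k') = if k = k' then 1 else 0 := by
  simp [gm, E, eq_comm]

theorem g_mul_adjoint_contraction_general (n p q : ℕ) (ω₁ : DF n p q) (ω₂ : DF n (p + 1) (q + 1))
    (h₂ : IsDF ω₂) :
    innerDF2 (mul (gm n) ω₁) ω₂ = innerDF ω₁ (contr ω₂) := by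
  have hp : 1 + p = p + 1 := Nat.add_comm 1 p
  have hq : 1 + q = q + 1 := Nat.add_comm 1 q
  rw [innerDF2, dif_pos ⟨hp, hq⟩, innerDF_cast, innerDF_mul _ _ (h₂.cast _ _)]
  simp only [sum_fun_fin_one_add, Fin.append_left, Fin.append_right, DFcast,
    comp_append_cast_eq_cons, gm_E, Nat.factorial_one, one_mul, mul_one]
  simp only [ite_mul, one_mul, zero_mul, sum_ite_irrel, sum_const_zero, sum_ite_eq, mem_univ,
    if_true]
  rw [innerDF]
  congr 1
  simp only [contr, mul_sum]
  exact sum_comm_cycle.symm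

/-- the adjoint of multiplication by `g` is the contraction `c`:
`⟨gω₁, ω₂⟩ = ⟨ω₁, cω₂⟩`. -/
theorem g_mul_adjoint_contraction (n p q : ℕ) (ω₁ : DF n p q) (ω₂ : DF n (p + 1) (q + 1))
    (h₁ : IsDF ω₁) (h₂ : IsDF ω₂) :
    innerDF2 (mul (gm n) ω₁) ω₂ = innerDF ω₁ (contr ω₂) :=
  g_mul_adjoint_contraction_general n p q ω₁ ω₂ h₂

end DoubleForm
end

section
/- For all p, q ≥ 0 with p + q ≤ n − 1, the space D^{p+1,q+1} decomposes orthogonally as Ker c ⊕ g·D^{p,q}, where c: D^{p+1,q+1} → D^{p,q} is the contraction. -/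
open scoped BigOperators

namespace DoubleForm

/-! ### Auxiliary infrastructure -/

open Finset

variable {n : ℕ}

/-- Pairing of two basis vectors. -/
lemma E_pair (a b : Fin n) : (∑ k, E n a k * E n b k) = if a = b then 1 else 0 := by
  simp only [E]
  rw [Finset.sum_congr rfl (fun k _ => ?_), Finset.sum_ite_eq' Finset.univ a
    (fun k => if k = b then (1:ℝ) else 0)]
  · simp [eq_comm]
  · rw [ite_mul, one_mul, zero_mul]

/-- Evaluating a genuine double form on permuted arguments. -/
lemma perm_val {p q : ℕ} (F : AlternatingMap ℝ (V n) (AlternatingMap ℝ (V n) ℝ (Fin q)) (Fin p))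
    (f : Fin p → V n) (g : Fin q → V n) (σ : Equiv.Perm (Fin p)) (ρ : Equiv.Perm (Fin q)) :
    F (f ∘ σ) (g ∘ ρ) =
      ((Equiv.Perm.sign σ : ℤ) : ℝ) * ((Equiv.Perm.sign ρ : ℤ) : ℝ) * F f g := by
  have h1 : F (f ∘ σ) = Equiv.Perm.sign σ • F f := F.map_perm f σ
  rw [h1, AlternatingMap.smul_apply, (F f).map_perm g ρ]
  rw [Units.smul_def, Units.smul_def, zsmul_eq_mul, zsmul_eq_mul]
  ring

/-- sign squared is one (as a real number). -/
lemma sign_sq {m : ℕ} (σ : Equiv.Perm (Fin m)) :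
    ((Equiv.Perm.sign σ : ℤ) : ℝ) * ((Equiv.Perm.sign σ : ℤ) : ℝ) = 1 := by
  rcases Int.units_eq_one_or (Equiv.Perm.sign σ) with h | h <;> rw [h] <;> norm_num

/-- Expansion of a genuine double form over the standard basis. -/
lemma isDF_expand {p q : ℕ} {γ : DF n p q} (hγ : IsDF γ) (x : Fin p → V n) (y : Fin q → V n) :
    γ x y = ∑ f : Fin p → Fin n, ∑ g : Fin q → Fin n,
      ((∏ i, x i (f i)) * ∏ j, y j (g j)) * γ (fun i => E n (f i)) (fun j => E n (g j)) := by
  obtain ⟨F, hF⟩ := hγ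
  have hx : x = fun i => ∑ k : Fin n, (fun i k => x i k • E n k) i k := by
    funext i k'
    simp only [Finset.sum_apply, Pi.smul_apply, E, smul_eq_mul, mul_ite, mul_one, mul_zero]
    rw [Finset.sum_ite_eq Finset.univ k' (fun k => x i k)]
    simp
  have hy : y = fun j => ∑ k : Fin n, (fun j k => y j k • E n k) j k := by
    funext j k'
    simp only [Finset.sum_apply, Pi.smul_apply, E, smul_eq_mul, mul_ite, mul_one, mul_zero]
    rw [Finset.sum_ite_eq Finset.univ k' (fun k => y j k)]
    simp
  let evy : (AlternatingMap ℝ (V n) ℝ (Fin q)) →ₗ[ℝ] ℝ :=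
    { toFun := fun L => L y, map_add' := fun _ _ => rfl, map_smul' := fun _ _ => rfl }
  let M : MultilinearMap ℝ (fun _ : Fin p => V n) ℝ := evy.compMultilinearMap F.toMultilinearMap
  have hM : ∀ v, M v = F v y := fun _ => rfl
  have step1 : γ x y = ∑ f : Fin p → Fin n, (∏ i, x i (f i)) * F (fun i => E n (f i)) y := by
    rw [hF, ← hM]
    conv_lhs => rw [hx]
    rw [M.map_sum]
    refine Finset.sum_congr rfl fun f _ => ?_
    rw [show (fun i => (fun i k => x i k • E n k) i (f i))
        = (fun i => x i (f i) • (fun i => E n (f i)) i) from rfl]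
    rw [M.map_smul_univ, hM, smul_eq_mul]
  rw [step1]
  refine Finset.sum_congr rfl fun f _ => ?_
  have step2 : F (fun i => E n (f i)) y =
      ∑ g : Fin q → Fin n, (∏ j, y j (g j)) * F (fun i => E n (f i)) (fun j => E n (g j)) := by
    have hN : ∀ w, (F (fun i => E n (f i))).toMultilinearMap w = F (fun i => E n (f i)) w :=
      fun _ => rfl
    rw [← hN]
    conv_lhs => rw [hy]
    rw [(F (fun i => E n (f i))).toMultilinearMap.map_sum]
    refine Finset.sum_congr rfl fun g _ => ?_
    rw [show (fun j => (fun j k => y j k • E n k) j (g j))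
        = (fun j => y j (g j) • (fun j => E n (g j)) j) from rfl]
    rw [(F (fun i => E n (f i))).toMultilinearMap.map_smul_univ, hN, smul_eq_mul]
  rw [step2, Finset.mul_sum]
  refine Finset.sum_congr rfl fun g _ => ?_
  simp only [← hF]
  ring

/-- A genuine double form vanishing on the basis vanishes. -/
lemma isDF_zero_of_basis {p q : ℕ} {γ : DF n p q} (hγ : IsDF γ)
    (h : ∀ (f : Fin p → Fin n) (g : Fin q → Fin n),
      γ (fun i => E n (f i)) (fun j => E n (g j)) = 0) : γ = 0 := by
  funext x y
  rw [isDF_expand hγ x y]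
  simp [h]

/-- Definiteness of the natural inner product on genuine forms. -/
lemma isDF_eq_zero_of_inner_self {p q : ℕ} {γ : DF n p q} (hγ : IsDF γ)
    (h : innerDF γ γ = 0) : γ = 0 := by
  refine isDF_zero_of_basis hγ fun f g => ?_
  unfold innerDF at h
  have hc : (((p.factorial * q.factorial : ℕ) : ℝ))⁻¹ ≠ 0 := by
    positivity
  have hsum : ∑ f : Fin p → Fin n, ∑ g : Fin q → Fin n,
      γ (fun i => E n (f i)) (fun j => E n (g j)) *
        γ (fun i => E n (f i)) (fun j => E n (g j)) = 0 := by
    field_simp at h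
    simpa [sq] using h
  have h1 := (Finset.sum_eq_zero_iff_of_nonneg (fun f _ =>
    Finset.sum_nonneg fun g _ => mul_self_nonneg _)).mp hsum f (Finset.mem_univ f)
  have h2 := (Finset.sum_eq_zero_iff_of_nonneg (fun g _ => mul_self_nonneg _)).mp h1 g
    (Finset.mem_univ g)
  exact mul_self_eq_zero.mp h2

lemma innerDF_comm {p q : ℕ} (ω θ : DF n p q) : innerDF ω θ = innerDF θ ω := by
  unfold innerDF
  congr 1
  exact Finset.sum_congr rfl fun f _ => Finset.sum_congr rfl fun g _ => mul_comm _ _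

lemma innerDF_zero_left {p q : ℕ} (θ : DF n p q) : innerDF (0 : DF n p q) θ = 0 := by
  unfold innerDF
  simp

/-- Contraction preserves genuine double forms. -/
lemma contr_isDF {p q : ℕ} {ω : DF n (p+1) (q+1)} (h : IsDF ω) :
    IsDF (n := n) (p := p) (q := q) (contr ω) := by
  obtain ⟨F, hF⟩ := h
  refine ⟨∑ j : Fin n,
    (AlternatingMap.curryLeftLinearMap.flip (E n j)).compAlternatingMap
      (F.curryLeft (E n j)), fun x y => ?_⟩
  let ev2 : (AlternatingMap ℝ (V n) (AlternatingMap ℝ (V n) ℝ (Fin q)) (Fin p)) →ₗ[ℝ] ℝ :=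
    { toFun := fun G => G x y, map_add' := fun _ _ => rfl, map_smul' := fun _ _ => rfl }
  show (∑ j : Fin n, ω (Fin.cons (E n j) x) (Fin.cons (E n j) y)) = ev2 (∑ j : Fin n, _)
  rw [map_sum]
  refine Finset.sum_congr rfl fun j _ => ?_
  show ω (Fin.cons (E n j) x) (Fin.cons (E n j) y) =
    ((AlternatingMap.curryLeftLinearMap.flip (E n j)).compAlternatingMap
      (F.curryLeft (E n j))) x y
  simp only [LinearMap.compAlternatingMap_apply, LinearMap.flip_apply,
    AlternatingMap.curryLeftLinearMap_apply, AlternatingMap.curryLeft_apply_apply]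
  rw [hF]
  rfl

/-- Evaluation of alternating maps as double forms, as a linear map. -/
noncomputable def evDF (p q : ℕ) :
    (AlternatingMap ℝ (V n) (AlternatingMap ℝ (V n) ℝ (Fin q)) (Fin p)) →ₗ[ℝ] DF n p q where
  toFun F := fun x y => F x y
  map_add' F G := rfl
  map_smul' r F := rfl

lemma isDF_iff_mem_range {p q : ℕ} (ω : DF n p q) :
    IsDF ω ↔ ω ∈ LinearMap.range (evDF (n := n) p q) := by
  constructor
  · rintro ⟨F, hF⟩
    exact ⟨F, by funext x y; exact (hF x y).symm⟩
  · rintro ⟨F, rfl⟩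
    exact ⟨F, fun _ _ => rfl⟩

/-- Multiplication by the metric as a linear map. -/
noncomputable def gmulL (p q : ℕ) : DF n p q →ₗ[ℝ] DF n (p+1) (q+1) where
  toFun β := DFcast (Nat.add_comm 1 p) (Nat.add_comm 1 q) (mul (gm n) β)
  map_add' β β' := by
    funext x y
    simp only [DFcast, mul, Pi.add_apply, mul_add, Finset.mul_sum, Finset.sum_add_distrib]
  map_smul' r β := by
    funext x y
    simp only [DFcast, mul, Pi.smul_apply, smul_eq_mul, Finset.mul_sum, RingHom.id_apply]
    refine Finset.sum_congr rfl fun σ _ => Finset.sum_congr rfl fun ρ _ => by ring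

/-- The natural inner product as a bilinear map. -/
noncomputable def innerB (p q : ℕ) : DF n p q →ₗ[ℝ] DF n p q →ₗ[ℝ] ℝ where
  toFun ω :=
    { toFun := fun θ => innerDF ω θ
      map_add' := fun θ θ' => by
        unfold innerDF
        simp only [Pi.add_apply, mul_add, Finset.mul_sum, Finset.sum_add_distrib]
      map_smul' := fun r θ => by
        unfold innerDF
        simp only [Pi.smul_apply, smul_eq_mul, Finset.mul_sum, RingHom.id_apply]
        refine Finset.sum_congr rfl fun f _ => Finset.sum_congr rfl fun g _ => by ring }
  map_add' ω ω' := by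
    refine LinearMap.ext fun θ => ?_
    show innerDF (ω + ω') θ = innerDF ω θ + innerDF ω' θ
    unfold innerDF
    simp only [Pi.add_apply, add_mul, mul_add, Finset.mul_sum, Finset.sum_add_distrib]
  map_smul' r ω := by
    refine LinearMap.ext fun θ => ?_
    show innerDF (r • ω) θ = r * innerDF ω θ
    unfold innerDF
    simp only [Pi.smul_apply, smul_eq_mul, Finset.mul_sum]
    refine Finset.sum_congr rfl fun f _ => Finset.sum_congr rfl fun g _ => by ring

/-- The product with the metric, written with `Fin (p+1)` indexing. -/
lemma mul_gm_apply {p q : ℕ} (h1 : 1 + p = p + 1) (h2 : 1 + q = q + 1) (β : DF n p q)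
    (x : Fin (p+1) → V n) (y : Fin (q+1) → V n) :
    DFcast h1 h2 (mul (gm n) β) x y
      = ((p.factorial * q.factorial : ℕ) : ℝ)⁻¹ *
        ∑ σ : Equiv.Perm (Fin (p+1)), ∑ ρ : Equiv.Perm (Fin (q+1)),
          ((Equiv.Perm.sign σ : ℤ) : ℝ) * ((Equiv.Perm.sign ρ : ℤ) : ℝ) *
          (∑ k, x (σ 0) k * y (ρ 0) k) *
          β (fun i => x (σ i.succ)) (fun j => y (ρ j.succ)) := by
  have key0p : (finCongr h1).symm 0 = Fin.castAdd p (0 : Fin 1) := by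
    ext; simp
  have key0q : (finCongr h2).symm 0 = Fin.castAdd q (0 : Fin 1) := by
    ext; simp
  have keysp : ∀ i : Fin p, (finCongr h1).symm i.succ = Fin.natAdd 1 i := fun i => by
    ext; simp [Nat.add_comm]
  have keysq : ∀ j : Fin q, (finCongr h2).symm j.succ = Fin.natAdd 1 j := fun j => by
    ext; simp [Nat.add_comm]
  unfold DFcast mul
  congr 1
  · norm_num [Nat.factorial]
  refine Fintype.sum_equiv ((finCongr h1).permCongr) _ _ fun σ => ?_
  refine Fintype.sum_equiv ((finCongr h2).permCongr) _ _ fun ρ => ?_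
  have hgm : gm n (fun i => x (Fin.cast h1 (σ (Fin.castAdd p i))))
      (fun j => y (Fin.cast h2 (ρ (Fin.castAdd q j))))
      = ∑ k, x (((finCongr h1).permCongr σ) 0) k * y (((finCongr h2).permCongr ρ) 0) k := by
    unfold gm
    refine Finset.sum_congr rfl fun k _ => ?_
    rw [Equiv.permCongr_apply, Equiv.permCongr_apply, key0p, key0q]
    rfl
  have hx : (fun i : Fin p => x (Fin.cast h1 (σ (Fin.natAdd 1 i))))
      = fun i => x ((((finCongr h1).permCongr σ)) i.succ) := by
    funext i
    rw [Equiv.permCongr_apply, keysp i]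
    rfl
  have hy : (fun j : Fin q => y (Fin.cast h2 (ρ (Fin.natAdd 1 j))))
      = fun j => y ((((finCongr h2).permCongr ρ)) j.succ) := by
    funext j
    rw [Equiv.permCongr_apply, keysq j]
    rfl
  rw [Equiv.Perm.sign_permCongr, Equiv.Perm.sign_permCongr, hgm, hx, hy]
set_option maxHeartbeats 1000000 in
/-- `w ↦ (∑ v k * w k) • L` as a linear map. -/
noncomputable def inn1 (n q : ℕ) (v : V n) (L : AlternatingMap ℝ (V n) ℝ (Fin q)) :
    V n →ₗ[ℝ] MultilinearMap ℝ (fun _ : Fin q => V n) ℝ where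
  toFun w := (∑ k, v k * w k) • L.toMultilinearMap
  map_add' a b := by
    have h : (∑ k, v k * (a + b) k) = (∑ k, v k * a k) + ∑ k, v k * b k := by
      simp [mul_add, Finset.sum_add_distrib]
    rw [h, add_smul]
  map_smul' r a := by
    have h : (∑ k, v k * (r • a) k) = r * ∑ k, v k * a k := by
      simp only [Pi.smul_apply, smul_eq_mul, Finset.mul_sum]
      exact Finset.sum_congr rfl fun k _ => by ring
    rw [h, RingHom.id_apply, mul_smul]

noncomputable def inn2 (n q : ℕ) (v : V n) (L : AlternatingMap ℝ (V n) ℝ (Fin q)) :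
    MultilinearMap ℝ (fun _ : Fin (q+1) => V n) ℝ := (inn1 n q v L).uncurryLeft

lemma inn2_apply (v : V n) (L : AlternatingMap ℝ (V n) ℝ (Fin q)) (m : Fin (q+1) → V n) :
    inn2 n q v L m = (∑ k, v k * m 0 k) * L (Fin.tail m) := rfl

lemma alternatization_smul {m : ℕ} (r : ℝ) (A : MultilinearMap ℝ (fun _ : Fin m => V n) ℝ) :
    MultilinearMap.alternatization (r • A) = r • MultilinearMap.alternatization A := by
  refine AlternatingMap.ext fun v => ?_
  rw [AlternatingMap.smul_apply]
  rw [MultilinearMap.alternatization_apply, MultilinearMap.alternatization_apply]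
  rw [Finset.smul_sum]
  refine Finset.sum_congr rfl fun σ _ => ?_
  rw [MultilinearMap.domDomCongr_apply, MultilinearMap.domDomCongr_apply,
    MultilinearMap.smul_apply]
  exact smul_comm _ _ _

set_option maxHeartbeats 1000000 in
noncomputable def altN (n q : ℕ) (v : V n) :
    (AlternatingMap ℝ (V n) ℝ (Fin q)) →ₗ[ℝ] (AlternatingMap ℝ (V n) ℝ (Fin (q+1))) where
  toFun L := MultilinearMap.alternatization (inn2 n q v L)
  map_add' a b := by
    rw [← map_add]
    congr 1
    refine MultilinearMap.ext fun m => ?_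
    rw [MultilinearMap.add_apply, inn2_apply, inn2_apply, inn2_apply,
      AlternatingMap.add_apply, mul_add]
  map_smul' r a := by
    rw [← alternatization_smul]
    congr 1
    refine MultilinearMap.ext fun m => ?_
    rw [MultilinearMap.smul_apply, inn2_apply, inn2_apply, AlternatingMap.smul_apply]
    simp only [smul_eq_mul, RingHom.id_apply]
    ring

lemma altN_apply (v : V n) (L : AlternatingMap ℝ (V n) ℝ (Fin q)) :
    altN n q v L = MultilinearMap.alternatization (inn2 n q v L) := rfl

lemma altN_add (v v' : V n) (L : AlternatingMap ℝ (V n) ℝ (Fin q)) :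
    altN n q (v + v') L = altN n q v L + altN n q v' L := by
  rw [altN_apply, altN_apply, altN_apply, ← map_add]
  congr 1
  refine MultilinearMap.ext fun m => ?_
  rw [MultilinearMap.add_apply, inn2_apply, inn2_apply, inn2_apply]
  have h : (∑ k, (v + v') k * m 0 k) = (∑ k, v k * m 0 k) + ∑ k, v' k * m 0 k := by
    simp [add_mul, Finset.sum_add_distrib]
  rw [h, add_mul]

lemma altN_smul (r : ℝ) (v : V n) (L : AlternatingMap ℝ (V n) ℝ (Fin q)) :
    altN n q (r • v) L = r • altN n q v L := by
  rw [altN_apply, altN_apply, ← alternatization_smul]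
  congr 1
  refine MultilinearMap.ext fun m => ?_
  rw [MultilinearMap.smul_apply, inn2_apply, inn2_apply]
  have h : (∑ k, (r • v) k * m 0 k) = r * ∑ k, v k * m 0 k := by
    simp only [Pi.smul_apply, smul_eq_mul, Finset.mul_sum]
    exact Finset.sum_congr rfl fun k _ => by ring
  rw [h]
  simp only [smul_eq_mul]
  ring

set_option maxHeartbeats 1000000 in
noncomputable def lamF (n p q : ℕ)
    (F : AlternatingMap ℝ (V n) (AlternatingMap ℝ (V n) ℝ (Fin q)) (Fin p)) :
    V n →ₗ[ℝ] MultilinearMap ℝ (fun _ : Fin p => V n)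
      (AlternatingMap ℝ (V n) ℝ (Fin (q+1))) where
  toFun v := (altN n q v).compMultilinearMap F.toMultilinearMap
  map_add' v v' := by
    refine MultilinearMap.ext fun x' => ?_
    rw [MultilinearMap.add_apply, LinearMap.compMultilinearMap_apply,
      LinearMap.compMultilinearMap_apply, LinearMap.compMultilinearMap_apply]
    exact altN_add v v' _
  map_smul' r v := by
    refine MultilinearMap.ext fun x' => ?_
    rw [RingHom.id_apply, MultilinearMap.smul_apply, LinearMap.compMultilinearMap_apply,
      LinearMap.compMultilinearMap_apply]
    exact altN_smul r v _

set_option maxHeartbeats 1000000 in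
noncomputable def oMul (n p q : ℕ)
    (F : AlternatingMap ℝ (V n) (AlternatingMap ℝ (V n) ℝ (Fin q)) (Fin p)) :
    MultilinearMap ℝ (fun _ : Fin (p+1) => V n) (AlternatingMap ℝ (V n) ℝ (Fin (q+1))) :=
  LinearMap.uncurryLeft (M := fun _ : Fin (p+1) => V n) (lamF n p q F)

lemma oMul_apply (F : AlternatingMap ℝ (V n) (AlternatingMap ℝ (V n) ℝ (Fin q)) (Fin p))
    (x' : Fin (p+1) → V n) :
    oMul n p q F x' = altN n q (x' 0) (F (Fin.tail x')) := rfl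

noncomputable def gMap (n p q : ℕ)
    (F : AlternatingMap ℝ (V n) (AlternatingMap ℝ (V n) ℝ (Fin q)) (Fin p)) :
    AlternatingMap ℝ (V n) (AlternatingMap ℝ (V n) ℝ (Fin (q+1))) (Fin (p+1)) :=
  MultilinearMap.alternatization (oMul n p q F)

set_option maxHeartbeats 1000000 in
lemma gMap_apply (F : AlternatingMap ℝ (V n) (AlternatingMap ℝ (V n) ℝ (Fin q)) (Fin p))
    (x : Fin (p+1) → V n) (y : Fin (q+1) → V n) :
    gMap n p q F x y = ∑ σ : Equiv.Perm (Fin (p+1)), ∑ ρ : Equiv.Perm (Fin (q+1)),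
      ((Equiv.Perm.sign σ : ℤ) : ℝ) * ((Equiv.Perm.sign ρ : ℤ) : ℝ) *
      (∑ k, x (σ 0) k * y (ρ 0) k) *
      F (fun i => x (σ i.succ)) (fun j => y (ρ j.succ)) := by
  let evY : (AlternatingMap ℝ (V n) ℝ (Fin (q+1))) →ₗ[ℝ] ℝ :=
    { toFun := fun L => L y, map_add' := fun _ _ => rfl, map_smul' := fun _ _ => rfl }
  have hGx : gMap n p q F x y = ∑ σ : Equiv.Perm (Fin (p+1)),
      ((Equiv.Perm.sign σ : ℤ) : ℝ) * (oMul n p q F (fun i => x (σ i)) y) := by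
    show evY (gMap n p q F x) = _
    rw [show gMap n p q F x = ∑ σ : Equiv.Perm (Fin (p+1)),
      Equiv.Perm.sign σ • ((oMul n p q F).domDomCongr σ) x from
        MultilinearMap.alternatization_apply _ x]
    rw [map_sum]
    refine Finset.sum_congr rfl fun σ _ => ?_
    show (Equiv.Perm.sign σ • ((oMul n p q F).domDomCongr σ) x) y = _
    rw [AlternatingMap.smul_apply, Units.smul_def, zsmul_eq_mul]
    rfl
  rw [hGx]
  refine Finset.sum_congr rfl fun σ _ => ?_
  have hOx : oMul n p q F (fun i => x (σ i)) y
      = ∑ ρ : Equiv.Perm (Fin (q+1)),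
      ((Equiv.Perm.sign ρ : ℤ) : ℝ) *
        ((∑ k, x (σ 0) k * y (ρ 0) k) * F (fun i => x (σ i.succ)) (fun j => y (ρ j.succ))) := by
    rw [oMul_apply, altN_apply]
    rw [show (MultilinearMap.alternatization
        (inn2 n q (x (σ 0)) (F (Fin.tail (fun i => x (σ i)))))) y
      = ∑ ρ : Equiv.Perm (Fin (q+1)), Equiv.Perm.sign ρ •
        ((inn2 n q (x (σ 0)) (F (Fin.tail (fun i => x (σ i))))).domDomCongr ρ) y from
        MultilinearMap.alternatization_apply _ y]
    refine Finset.sum_congr rfl fun ρ _ => ?_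
    rw [Units.smul_def, zsmul_eq_mul]
    rfl
  rw [hOx, Finset.mul_sum]
  refine Finset.sum_congr rfl fun ρ _ => ?_
  ring

/-- Multiplication by the metric preserves genuine double forms. -/
lemma gmul_isDF {p q : ℕ} (h1 : 1 + p = p + 1) (h2 : 1 + q = q + 1) {β : DF n p q}
    (hβ : IsDF β) : IsDF (DFcast h1 h2 (mul (gm n) β)) := by
  obtain ⟨F, hF⟩ := hβ
  refine ⟨(((p.factorial * q.factorial : ℕ) : ℝ))⁻¹ • gMap n p q F, fun x y => ?_⟩
  rw [mul_gm_apply h1 h2 β x y]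
  rw [AlternatingMap.smul_apply, AlternatingMap.smul_apply, smul_eq_mul]
  congr 1
  rw [gMap_apply]
  refine Finset.sum_congr rfl fun σ _ => Finset.sum_congr rfl fun ρ _ => ?_
  rw [← hF]

lemma sum_swap_24 {A B C D : Type*} [Fintype A] [Fintype B] [Fintype C] [Fintype D]
    (u : A → B → C → D → ℝ) :
    ∑ a, ∑ b, ∑ c, ∑ d, u a b c d = ∑ c, ∑ d, ∑ a, ∑ b, u a b c d := by
  calc ∑ a, ∑ b, ∑ c, ∑ d, u a b c d
      = ∑ a, ∑ c, ∑ b, ∑ d, u a b c d :=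
        Finset.sum_congr rfl fun a _ => Finset.sum_comm
    _ = ∑ c, ∑ a, ∑ b, ∑ d, u a b c d := Finset.sum_comm
    _ = ∑ c, ∑ a, ∑ d, ∑ b, u a b c d :=
        Finset.sum_congr rfl fun c _ => Finset.sum_congr rfl fun a _ => Finset.sum_comm
    _ = ∑ c, ∑ d, ∑ a, ∑ b, u a b c d :=
        Finset.sum_congr rfl fun c _ => Finset.sum_comm

lemma cons_comp (k : Fin n) {p : ℕ} (f'' : Fin p → Fin n) :
    (fun i => E n ((Fin.cons k f'' : Fin (p+1) → Fin n) i))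
      = Fin.cons (E n k) (fun i => E n (f'' i)) := by
  funext i
  refine Fin.cases ?_ ?_ i
  · simp
  · intro i'
    simp

set_option maxHeartbeats 1600000 in
/-- Adjointness of multiplication by `g` and contraction. -/
lemma adj {p q : ℕ} (h1 : 1 + p = p + 1) (h2 : 1 + q = q + 1)
    {α : DF n (p+1) (q+1)} (hα : IsDF α) (β : DF n p q) :
    innerDF α (DFcast h1 h2 (mul (gm n) β))
      = innerDF (n := n) (p := p) (q := q) (contr α) β := by
  obtain ⟨F, hF⟩ := hα
  have contr_eq : ∀ (x : Fin p → V n) (y : Fin q → V n),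
      contr α x y = ∑ j : Fin n, α (Fin.cons (E n j) x) (Fin.cons (E n j) y) :=
    fun _ _ => rfl
  -- Step 1: unfold the left-hand side using `mul_gm_apply`.
  have step1 : innerDF α (DFcast h1 h2 (mul (gm n) β))
      = (((p+1).factorial * (q+1).factorial : ℕ) : ℝ)⁻¹ *
        ∑ f : Fin (p+1) → Fin n, ∑ g : Fin (q+1) → Fin n,
          α (fun i => E n (f i)) (fun j => E n (g j)) *
          (((p.factorial * q.factorial : ℕ) : ℝ)⁻¹ *
            ∑ σ : Equiv.Perm (Fin (p+1)), ∑ ρ : Equiv.Perm (Fin (q+1)),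
              ((Equiv.Perm.sign σ : ℤ) : ℝ) * ((Equiv.Perm.sign ρ : ℤ) : ℝ) *
              (∑ k, E n (f (σ 0)) k * E n (g (ρ 0)) k) *
              β (fun i => E n (f (σ i.succ))) (fun j => E n (g (ρ j.succ)))) := by
    unfold innerDF
    congr 1
    refine Finset.sum_congr rfl fun f _ => Finset.sum_congr rfl fun g _ => ?_
    congr 1
    exact mul_gm_apply h1 h2 β _ _
  rw [step1]
  -- Step 2: push all constants inside and reorganize as a quadruple sum.
  have step2 : ∑ f : Fin (p+1) → Fin n, ∑ g : Fin (q+1) → Fin n,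
        α (fun i => E n (f i)) (fun j => E n (g j)) *
        (((p.factorial * q.factorial : ℕ) : ℝ)⁻¹ *
          ∑ σ : Equiv.Perm (Fin (p+1)), ∑ ρ : Equiv.Perm (Fin (q+1)),
            ((Equiv.Perm.sign σ : ℤ) : ℝ) * ((Equiv.Perm.sign ρ : ℤ) : ℝ) *
            (∑ k, E n (f (σ 0)) k * E n (g (ρ 0)) k) *
            β (fun i => E n (f (σ i.succ))) (fun j => E n (g (ρ j.succ))))
      = ((p.factorial * q.factorial : ℕ) : ℝ)⁻¹ *
        ∑ f : Fin (p+1) → Fin n, ∑ g : Fin (q+1) → Fin n,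
          ∑ σ : Equiv.Perm (Fin (p+1)), ∑ ρ : Equiv.Perm (Fin (q+1)),
            ((Equiv.Perm.sign σ : ℤ) : ℝ) * ((Equiv.Perm.sign ρ : ℤ) : ℝ) *
            (∑ k, E n (f (σ 0)) k * E n (g (ρ 0)) k) *
            (α (fun i => E n (f i)) (fun j => E n (g j)) *
              β (fun i => E n (f (σ i.succ))) (fun j => E n (g (ρ j.succ)))) := by
    conv_rhs => rw [Finset.mul_sum]
    refine Finset.sum_congr rfl fun f _ => ?_
    conv_rhs => rw [Finset.mul_sum]
    refine Finset.sum_congr rfl fun g _ => ?_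
    rw [Finset.mul_sum, Finset.mul_sum]
    conv_rhs => rw [Finset.mul_sum]
    refine Finset.sum_congr rfl fun σ _ => ?_
    rw [Finset.mul_sum, Finset.mul_sum]
    conv_rhs => rw [Finset.mul_sum]
    refine Finset.sum_congr rfl fun ρ _ => ?_
    ring
  rw [step2, sum_swap_24]
  -- Step 3: for each pair of permutations, reindex the sums over `f` and `g`.
  have central : ∀ (σ : Equiv.Perm (Fin (p+1))) (ρ : Equiv.Perm (Fin (q+1))),
      (∑ f : Fin (p+1) → Fin n, ∑ g : Fin (q+1) → Fin n,
        ((Equiv.Perm.sign σ : ℤ) : ℝ) * ((Equiv.Perm.sign ρ : ℤ) : ℝ) *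
        (∑ k, E n (f (σ 0)) k * E n (g (ρ 0)) k) *
        (α (fun i => E n (f i)) (fun j => E n (g j)) *
          β (fun i => E n (f (σ i.succ))) (fun j => E n (g (ρ j.succ)))))
      = ∑ f : Fin (p+1) → Fin n, ∑ g : Fin (q+1) → Fin n,
          (∑ k, E n (f 0) k * E n (g 0) k) *
          (α (fun i => E n (f i)) (fun j => E n (g j)) *
            β (fun i => E n (f i.succ)) (fun j => E n (g j.succ))) := by
    intro σ ρ
    refine Fintype.sum_equiv (Equiv.arrowCongr σ.symm (Equiv.refl (Fin n))) _ _ fun f => ?_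
    refine Fintype.sum_equiv (Equiv.arrowCongr ρ.symm (Equiv.refl (Fin n))) _ _ fun g => ?_
    have hperm : α (fun i => E n (f (σ i))) (fun j => E n (g (ρ j)))
        = ((Equiv.Perm.sign σ : ℤ) : ℝ) * ((Equiv.Perm.sign ρ : ℤ) : ℝ) *
          α (fun i => E n (f i)) (fun j => E n (g j)) := by
      simp only [hF]
      exact perm_val F (fun i => E n (f i)) (fun j => E n (g j)) σ ρ
    show ((Equiv.Perm.sign σ : ℤ) : ℝ) * ((Equiv.Perm.sign ρ : ℤ) : ℝ) *
        (∑ k, E n (f (σ 0)) k * E n (g (ρ 0)) k) *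
        (α (fun i => E n (f i)) (fun j => E n (g j)) *
          β (fun i => E n (f (σ i.succ))) (fun j => E n (g (ρ j.succ))))
      = (∑ k, E n (f (σ 0)) k * E n (g (ρ 0)) k) *
        (α (fun i => E n (f (σ i))) (fun j => E n (g (ρ j))) *
          β (fun i => E n (f (σ i.succ))) (fun j => E n (g (ρ j.succ))))
    rw [hperm]
    ring
  have step3 : ∑ σ : Equiv.Perm (Fin (p+1)), ∑ ρ : Equiv.Perm (Fin (q+1)),
      (∑ f : Fin (p+1) → Fin n, ∑ g : Fin (q+1) → Fin n,
        ((Equiv.Perm.sign σ : ℤ) : ℝ) * ((Equiv.Perm.sign ρ : ℤ) : ℝ) *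
        (∑ k, E n (f (σ 0)) k * E n (g (ρ 0)) k) *
        (α (fun i => E n (f i)) (fun j => E n (g j)) *
          β (fun i => E n (f (σ i.succ))) (fun j => E n (g (ρ j.succ)))))
      = (((p+1).factorial * (q+1).factorial : ℕ) : ℝ) *
        ∑ f : Fin (p+1) → Fin n, ∑ g : Fin (q+1) → Fin n,
          (∑ k, E n (f 0) k * E n (g 0) k) *
          (α (fun i => E n (f i)) (fun j => E n (g j)) *
            β (fun i => E n (f i.succ)) (fun j => E n (g j.succ))) := by
    rw [Finset.sum_congr rfl fun σ _ => Finset.sum_congr rfl fun ρ _ => central σ ρ]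
    rw [Finset.sum_const, Finset.sum_const, Finset.card_univ, Finset.card_univ,
      Fintype.card_perm, Fintype.card_perm, Fintype.card_fin, Fintype.card_fin,
      smul_smul, nsmul_eq_mul]
    try push_cast
    try ring
  rw [step3]
  -- Step 4: split off the first arguments and sum them out.
  have step4 : ∑ f : Fin (p+1) → Fin n, ∑ g : Fin (q+1) → Fin n,
      (∑ k, E n (f 0) k * E n (g 0) k) *
      (α (fun i => E n (f i)) (fun j => E n (g j)) *
        β (fun i => E n (f i.succ)) (fun j => E n (g j.succ)))
      = ∑ f'' : Fin p → Fin n, ∑ g'' : Fin q → Fin n,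
          contr α (fun i => E n (f'' i)) (fun j => E n (g'' j)) *
          β (fun i => E n (f'' i)) (fun j => E n (g'' j)) := by
    rw [← Equiv.sum_comp (Fin.consEquiv (fun _ : Fin (p+1) => Fin n))
      (fun f => ∑ g : Fin (q+1) → Fin n,
        (∑ k, E n (f 0) k * E n (g 0) k) *
        (α (fun i => E n (f i)) (fun j => E n (g j)) *
          β (fun i => E n (f i.succ)) (fun j => E n (g j.succ))))]
    rw [Fintype.sum_prod_type]
    have inner4 : ∀ (a : Fin n) (f'' : Fin p → Fin n),
        (∑ g : Fin (q+1) → Fin n,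
          (∑ k, E n ((Fin.consEquiv (fun _ : Fin (p+1) => Fin n)) (a, f'') 0) k * E n (g 0) k) *
          (α (fun i => E n ((Fin.consEquiv (fun _ : Fin (p+1) => Fin n)) (a, f'') i))
              (fun j => E n (g j)) *
            β (fun i => E n ((Fin.consEquiv (fun _ : Fin (p+1) => Fin n)) (a, f'') i.succ))
              (fun j => E n (g j.succ))))
        = ∑ g'' : Fin q → Fin n,
            α (Fin.cons (E n a) (fun i => E n (f'' i))) (Fin.cons (E n a) (fun j => E n (g'' j))) *
            β (fun i => E n (f'' i)) (fun j => E n (g'' j)) := by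
      intro a f''
      rw [← Equiv.sum_comp (Fin.consEquiv (fun _ : Fin (q+1) => Fin n))
        (fun g => (∑ k, E n ((Fin.consEquiv (fun _ : Fin (p+1) => Fin n)) (a, f'') 0) k * E n (g 0) k) *
          (α (fun i => E n ((Fin.consEquiv (fun _ : Fin (p+1) => Fin n)) (a, f'') i))
              (fun j => E n (g j)) *
            β (fun i => E n ((Fin.consEquiv (fun _ : Fin (p+1) => Fin n)) (a, f'') i.succ))
              (fun j => E n (g j.succ))))]
      rw [Fintype.sum_prod_type]
      have collapse : ∀ b : Fin n, ∀ g'' : Fin q → Fin n,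
          (∑ k, E n ((Fin.consEquiv (fun _ : Fin (p+1) => Fin n)) (a, f'') 0) k *
            E n ((Fin.consEquiv (fun _ : Fin (q+1) => Fin n)) (b, g'') 0) k) *
          (α (fun i => E n ((Fin.consEquiv (fun _ : Fin (p+1) => Fin n)) (a, f'') i))
              (fun j => E n ((Fin.consEquiv (fun _ : Fin (q+1) => Fin n)) (b, g'') j)) *
            β (fun i => E n ((Fin.consEquiv (fun _ : Fin (p+1) => Fin n)) (a, f'') i.succ))
              (fun j => E n ((Fin.consEquiv (fun _ : Fin (q+1) => Fin n)) (b, g'') j.succ)))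
          = (if a = b then 1 else 0) *
            (α (Fin.cons (E n a) (fun i => E n (f'' i)))
                (Fin.cons (E n b) (fun j => E n (g'' j))) *
              β (fun i => E n (f'' i)) (fun j => E n (g'' j))) := by
        intro b g''
        have e1 : (Fin.consEquiv (fun _ : Fin (p+1) => Fin n)) (a, f'')
            = (Fin.cons a f'' : Fin (p+1) → Fin n) := rfl
        have e2 : (Fin.consEquiv (fun _ : Fin (q+1) => Fin n)) (b, g'')
            = (Fin.cons b g'' : Fin (q+1) → Fin n) := rfl
        rw [e1, e2]
        simp only [Fin.cons_zero, Fin.cons_succ]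
        rw [E_pair, cons_comp, cons_comp]
      rw [Finset.sum_congr rfl fun b _ => Finset.sum_congr rfl fun g'' _ => collapse b g'']
      rw [Finset.sum_comm]
      refine Finset.sum_congr rfl fun g'' _ => ?_
      rw [Finset.sum_congr rfl fun b _ => (ite_mul _ _ _ _)]
      simp only [one_mul, zero_mul]
      rw [Finset.sum_ite_eq]
      simp
    rw [Finset.sum_congr rfl fun a _ => Finset.sum_congr rfl fun f'' _ => inner4 a f'']
    rw [Finset.sum_comm]
    refine Finset.sum_congr rfl fun f'' _ => ?_
    rw [Finset.sum_comm]
    refine Finset.sum_congr rfl fun g'' _ => ?_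
    rw [contr_eq, Finset.sum_mul]
    refine Finset.sum_congr rfl fun a _ => ?_
    rfl
  rw [step4]
  -- Step 5: conclude by arithmetic on the constants.
  show _ = innerDF (n := n) (p := p) (q := q) (contr α) β
  unfold innerDF
  have hpq1 : (((p+1).factorial * (q+1).factorial : ℕ) : ℝ) ≠ 0 := by
    have := Nat.factorial_pos (p+1)
    have := Nat.factorial_pos (q+1)
    positivity
  field_simp
  rfl

/-- Alternating maps into finite free modules form a finite module. -/
lemma altMap_finite {m : ℕ} (W : Type) [AddCommGroup W] [Module ℝ W] [Module.Finite ℝ W]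
    [Module.Free ℝ W] : Module.Finite ℝ (AlternatingMap ℝ (V n) W (Fin m)) := by
  let L : AlternatingMap ℝ (V n) W (Fin m) →ₗ[ℝ] MultilinearMap ℝ (fun _ : Fin m => V n) W :=
    { toFun := fun f => f.toMultilinearMap
      map_add' := fun _ _ => rfl
      map_smul' := fun _ _ => rfl }
  exact Module.Finite.of_injective L AlternatingMap.coe_multilinearMap_injective

/-- Orthogonal projection onto a finite-dimensional subspace, relative to a bilinear form
that is definite on the subspace. -/
lemma proj_exists {M : Type*} [AddCommGroup M] [Module ℝ M]
    (B : M →ₗ[ℝ] M →ₗ[ℝ] ℝ) (U : Submodule ℝ M) [FiniteDimensional ℝ U]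
    (hdef : ∀ u ∈ U, B u u = 0 → u = 0) (ω : M) :
    ∃ u ∈ U, ∀ u' ∈ U, B u' (ω - u) = 0 := by
  let Θ : U →ₗ[ℝ] Module.Dual ℝ U := (U.subtype.dualMap).comp (B.flip.comp U.subtype)
  have hΘ : ∀ (u u' : U), Θ u u' = B (u' : M) (u : M) := fun _ _ => rfl
  have hinj : Function.Injective Θ := by
    rw [← LinearMap.ker_eq_bot]
    refine (Submodule.eq_bot_iff _).mpr fun u hu => ?_
    have h0 : B (u : M) (u : M) = 0 := by
      have h1 : Θ u = 0 := LinearMap.mem_ker.mp hu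
      have h2 := LinearMap.congr_fun h1 u
      rw [hΘ] at h2
      exact h2
    exact Subtype.ext (hdef u u.2 h0)
  have hsurj : Function.Surjective Θ := by
    have hrank : Module.finrank ℝ U = Module.finrank ℝ (Module.Dual ℝ U) :=
      (Subspace.dual_finrank_eq).symm
    exact (LinearMap.injective_iff_surjective_of_finrank_eq_finrank hrank).mp hinj
  obtain ⟨u, hu⟩ := hsurj (U.subtype.dualMap (B.flip ω))
  refine ⟨u, u.2, fun u' hu' => ?_⟩
  have h3 := LinearMap.congr_fun hu ⟨u', hu'⟩
  have h4 : B u' (u : M) = B u' ω := h3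
  rw [(B u').map_sub, h4, sub_self]

set_option maxHeartbeats 1000000 in
/-- for `p + q ≤ n − 1`, `D^{p+1,q+1} = Ker c ⊕ g·D^{p,q}` orthogonally. -/
theorem orthogonal_decomposition (n p q : ℕ) (h : p + q + 1 ≤ n) :
    (∀ ω : DF n (p + 1) (q + 1), IsDF ω →
      ∃ (α : DF n (p + 1) (q + 1)) (β : DF n p q),
        IsDF α ∧ IsDF β ∧ contr α = 0 ∧
        ω = α + DFcast (show 1 + p = p + 1 by omega) (show 1 + q = q + 1 by omega)
              (mul (gm n) β)) ∧
    (∀ (α : DF n (p + 1) (q + 1)) (β : DF n p q), IsDF α → IsDF β → contr α = 0 →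
      innerDF α (DFcast (show 1 + p = p + 1 by omega) (show 1 + q = q + 1 by omega)
        (mul (gm n) β)) = 0) ∧
    (∀ γ : DF n (p + 1) (q + 1), IsDF γ → contr γ = 0 →
      (∃ β : DF n p q, IsDF β ∧
        γ = DFcast (show 1 + p = p + 1 by omega) (show 1 + q = q + 1 by omega)
              (mul (gm n) β)) → γ = 0) := by
  classical
  have hp1 : (1 : ℕ) + p = p + 1 := Nat.add_comm 1 p
  have hq1 : (1 : ℕ) + q = q + 1 := Nat.add_comm 1 q
  refine ⟨?_, ?_, ?_⟩
  · -- existence of the decomposition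
    intro ω hω
    haveI i1 : Module.Finite ℝ (AlternatingMap ℝ (V n) ℝ (Fin q)) := altMap_finite ℝ
    haveI i2 : Module.Finite ℝ
        (AlternatingMap ℝ (V n) (AlternatingMap ℝ (V n) ℝ (Fin q)) (Fin p)) :=
      altMap_finite _
    set Gl := gmulL (n := n) p q with hGl
    set U : Submodule ℝ (DF n (p+1) (q+1)) :=
      LinearMap.range (Gl.comp (evDF (n := n) p q)) with hU
    haveI : FiniteDimensional ℝ U := Module.Finite.range (Gl.comp (evDF (n := n) p q))
    have hUg : ∀ u ∈ U, IsDF u := by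
      rintro u ⟨F0, rfl⟩
      exact gmul_isDF hp1 hq1 ⟨F0, fun _ _ => rfl⟩
    have hdef : ∀ u ∈ U, innerB (n := n) (p+1) (q+1) u u = 0 → u = 0 :=
      fun u hu h0 => isDF_eq_zero_of_inner_self (hUg u hu) h0
    obtain ⟨u, hu, hperp⟩ := proj_exists (innerB (n := n) (p+1) (q+1)) U hdef ω
    obtain ⟨F0, hF0⟩ := hu
    have hβ : IsDF (evDF (n := n) p q F0) := ⟨F0, fun _ _ => rfl⟩
    have hα : IsDF (ω - u) := by
      rw [isDF_iff_mem_range] at hω ⊢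
      have hum : u ∈ LinearMap.range (evDF (n := n) (p+1) (q+1)) := by
        rw [← isDF_iff_mem_range]
        exact hUg u ⟨F0, hF0⟩
      exact sub_mem hω hum
    have hcd : IsDF (n := n) (p := p) (q := q) (contr (ω - u)) := contr_isDF hα
    have hczero : contr (ω - u) = 0 := by
      obtain ⟨Fc, hFc⟩ := id hcd
      have hmem : Gl (contr (ω - u)) ∈ U := by
        refine ⟨Fc, ?_⟩
        have hev : evDF (n := n) p q Fc = contr (ω - u) := by
          funext x y
          exact (hFc x y).symm
        show Gl (evDF (n := n) p q Fc) = Gl (contr (ω - u))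
        rw [hev]
      have h0 : innerDF (Gl (contr (ω - u))) (ω - u) = 0 := hperp _ hmem
      rw [innerDF_comm] at h0
      have h2 := adj hp1 hq1 hα (contr (ω - u))
      have h3 : innerDF (n := n) (p := p) (q := q) (contr (ω - u)) (contr (ω - u)) = 0 := by
        rw [← h2]
        exact h0
      exact isDF_eq_zero_of_inner_self hcd h3
    refine ⟨ω - u, evDF (n := n) p q F0, hα, hβ, hczero, ?_⟩
    have hueq : DFcast (show 1 + p = p + 1 by omega) (show 1 + q = q + 1 by omega)
        (mul (gm n) (evDF (n := n) p q F0)) = u := by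
      rw [← hF0]
      rfl
    rw [hueq]
    abel
  · -- orthogonality
    intro α β hα hβ hc
    rw [adj _ _ hα β, hc]
    exact innerDF_zero_left β
  · -- uniqueness
    rintro γ hγ hc ⟨β, hβ, hγβ⟩
    refine isDF_eq_zero_of_inner_self hγ ?_
    nth_rewrite 2 [hγβ]
    rw [adj _ _ hγ β, hc]
    exact innerDF_zero_left β

end DoubleForm
end

section
/- The first Bianchi sum is a graded derivation: for ω ∈ D^{p,q} and θ ∈ D^{r,s}, B(ω·θ) = Bω·θ + (−1)^{p+q} ω·Bθ. Consequently Ker B is a subalgebra of the algebra of double forms. -/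
open scoped BigOperators

namespace DoubleForm

open Equiv Equiv.Perm Finset

section Infra

/-! ### basic Fin lemmas -/

lemma val_sA {N : ℕ} (p : Fin (N+1)) (i : Fin N) :
    (p.succAbove i : ℕ) = if (i : ℕ) < (p : ℕ) then (i : ℕ) else (i : ℕ) + 1 := by
  rw [Fin.succAbove]
  split_ifs with h1 h2 h2 <;>
    simp_all [Fin.lt_def, Fin.coe_castSucc, Fin.val_succ] <;> omega

lemma cons_apply_val {α : Type*} {m : ℕ} (v : α) (w : Fin m → α) (t : Fin (m+1)) :
    (Fin.cons v w : Fin (m+1) → α) t = if h : (t : ℕ) = 0 then v else w ⟨(t : ℕ) - 1, by omega⟩ := by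
  induction t using Fin.cases with
  | zero => simp
  | succ i =>
    rw [Fin.cons_succ, dif_neg (by simp)]
    refine congrArg w ?_
    ext
    simp

lemma cycleRange_val {q : ℕ} (t₀ t : Fin q) :
    (t₀.cycleRange t : ℕ) =
      if (t : ℕ) < (t₀ : ℕ) then (t : ℕ) + 1
      else if (t : ℕ) = (t₀ : ℕ) then 0 else (t : ℕ) := by
  rcases q with _ | N
  · exact t.elim0
  rcases lt_trichotomy (t : ℕ) (t₀ : ℕ) with h | h | h
  · rw [if_pos h, Fin.coe_cycleRange_of_le (by rw [Fin.le_def]; omega),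
      if_neg (by intro hc; rw [hc] at h; omega)]
  · rw [if_neg (by omega), if_pos h, Fin.cycleRange_of_eq (Fin.ext h), Fin.val_zero]
  · rw [if_neg (by omega), if_neg (by omega), Fin.cycleRange_of_gt (by rwa [Fin.lt_def])]

lemma units_smul_real (u : ℤˣ) (x : ℝ) : u • x = ((u : ℤ) : ℝ) * x := by
  rw [Units.smul_def, zsmul_eq_mul]

lemma sign_coe_pow (k : ℕ) : ((((-1 : ℤˣ) ^ k : ℤˣ) : ℤ) : ℝ) = (-1 : ℝ) ^ k := by
  rcases Nat.even_or_odd k with h | h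
  · rw [h.neg_one_pow, h.neg_one_pow] ; simp
  · rw [h.neg_one_pow, h.neg_one_pow] ; simp

/-! ### permutation decomposition -/

/-- Lift a permutation of `Fin N` to one of `Fin (N+1)` fixing `0`. -/
def permLift {N : ℕ} (e : Perm (Fin N)) : Perm (Fin (N+1)) :=
  Equiv.Perm.decomposeFin.symm (0, e)

@[simp] lemma permLift_zero {N : ℕ} (e : Perm (Fin N)) : permLift e 0 = 0 := by
  simp [permLift]

@[simp] lemma permLift_succ {N : ℕ} (e : Perm (Fin N)) (u : Fin N) :
    permLift e u.succ = (e u).succ := by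
  simp [permLift, Equiv.Perm.decomposeFin_symm_apply_succ]

@[simp] lemma sign_permLift {N : ℕ} (e : Perm (Fin N)) :
    Equiv.Perm.sign (permLift e) = Equiv.Perm.sign e := by
  simp [permLift, Equiv.Perm.decomposeFin.symm_sign]

/-- A permutation sending `m ↦ 0` and `m.succAbove u ↦ (e u).succ`. -/
def permI {M N : ℕ} (h : M = N+1) (m : Fin M) (e : Perm (Fin N)) : Perm (Fin M) :=
  (finCongr h.symm).permCongr (permLift e * (Fin.cast h m).cycleRange)

lemma permI_val {M N : ℕ} (h : M = N+1) (m : Fin M) (e : Perm (Fin N)) (t : Fin M) :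
    (permI h m e t : ℕ) =
      if htm : (t : ℕ) = (m : ℕ) then 0
      else (e ⟨if (t : ℕ) < (m : ℕ) then (t : ℕ) else (t : ℕ) - 1, by
        have := t.isLt; have := m.isLt; split_ifs <;> omega⟩ : ℕ) + 1 := by
  have hrw : ∀ v : Fin (N+1), ((finCongr h.symm) v : ℕ) = (v : ℕ) := fun v => rfl
  rw [permI, Equiv.permCongr_apply, finCongr_symm, Equiv.Perm.mul_apply]
  have hft : (finCongr h) t = Fin.cast h t := rfl
  rw [hft]
  by_cases htm : (t : ℕ) = (m : ℕ)
  · rw [dif_pos htm]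
    have : Fin.cast h t = Fin.cast h m := by ext; simpa using htm
    rw [this, Fin.cycleRange_self, permLift_zero, hrw]
    simp
  · rw [dif_neg htm]
    have key : Fin.cast h t = (Fin.cast h m).succAbove
        ⟨if (t : ℕ) < (m : ℕ) then (t : ℕ) else (t : ℕ) - 1, by
          have := t.isLt; have := m.isLt; split_ifs <;> omega⟩ := by
      ext
      rw [val_sA]
      simp only [Fin.coe_cast]
      split_ifs <;> omega
    rw [key, Fin.cycleRange_succAbove, permLift_succ, hrw]
    simp

lemma permI_sign {M N : ℕ} (h : M = N+1) (m : Fin M) (e : Perm (Fin N)) :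
    ((Equiv.Perm.sign (permI h m e) : ℤ) : ℝ) =
      (-1 : ℝ) ^ (m : ℕ) * ((Equiv.Perm.sign e : ℤ) : ℝ) := by
  rw [permI, Equiv.Perm.sign_permCongr, map_mul, sign_permLift, Fin.sign_cycleRange]
  rw [Units.val_mul, Int.cast_mul, Fin.coe_cast, sign_coe_pow]
  ring

lemma sum_permI {M N : ℕ} (h : M = N+1) (f : Perm (Fin M) → ℝ) :
    ∑ ρ : Perm (Fin M), f ρ = ∑ m : Fin M, ∑ e : Perm (Fin N), f (permI h m e) := by
  have hb : Function.Bijective (fun me : Fin M × Perm (Fin N) => permI h me.1 me.2) := ?_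
  · rw [(Fintype.sum_bijective _ hb (fun me => f (permI h me.1 me.2)) f (fun _ => rfl)).symm,
      Fintype.sum_prod_type]
  rw [Fintype.bijective_iff_injective_and_card]
  refine ⟨?_, by subst h; simp [Fintype.card_perm, Nat.factorial_succ]⟩
  rintro ⟨m, e⟩ ⟨m', e'⟩ hh
  simp only at hh
  have hm : m = m' := by
    have h1 := permI_val h m e m
    have h2 := permI_val h m' e' m
    rw [dif_pos rfl] at h1
    rw [hh] at h1
    rw [h1] at h2
    by_contra hne
    rw [dif_neg (fun hv => hne (Fin.ext hv))] at h2
    omega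
  subst hm
  have he : e = e' := by
    ext u
    set t : Fin M := Fin.cast h.symm ((Fin.cast h m).succAbove u) with ht
    have htv : (t : ℕ) = if (u : ℕ) < (m : ℕ) then (u : ℕ) else (u : ℕ) + 1 := by
      rw [ht]; simp [val_sA]
    have hne : ¬ (t : ℕ) = (m : ℕ) := by rw [htv]; split_ifs <;> omega
    have e1 := permI_val h m e t
    have e2 := permI_val h m e' t
    rw [hh, e2, dif_neg hne] at e1
    simp only [dif_neg hne] at e1
    have hu : (⟨if (t : ℕ) < (m : ℕ) then (t : ℕ) else (t : ℕ) - 1, by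
        have := u.isLt; have := m.isLt; rw [htv]; split_ifs <;> omega⟩ : Fin N) = u := by
      ext; simp only [htv]; split_ifs <;> omega
    rw [hu] at e1
    omega
  rw [he]

/-- A permutation sending `k ↦ j` and `(positions around k) ↦ j.succAbove ∘ e`. -/
def permJ {M N : ℕ} (h : M = N+1) (j : Fin (N+1)) (e : Perm (Fin N)) (k : Fin M) :
    Perm (Fin M) :=
  (finCongr h.symm).permCongr (j.cycleRange⁻¹ * (permLift e * (Fin.cast h k).cycleRange))

lemma permJ_val {M N : ℕ} (h : M = N+1) (j : Fin (N+1)) (e : Perm (Fin N)) (k : Fin M)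
    (t : Fin M) :
    (permJ h j e k t : ℕ) =
      if htk : (t : ℕ) = (k : ℕ) then (j : ℕ)
      else (j.succAbove (e ⟨if (t : ℕ) < (k : ℕ) then (t : ℕ) else (t : ℕ) - 1, by
        have := t.isLt; have := k.isLt; split_ifs <;> omega⟩) : ℕ) := by
  have hrw : ∀ v : Fin (N+1), ((finCongr h.symm) v : ℕ) = (v : ℕ) := fun v => rfl
  rw [permJ, Equiv.permCongr_apply, finCongr_symm, Equiv.Perm.mul_apply, Equiv.Perm.mul_apply]
  have hft : (finCongr h) t = Fin.cast h t := rfl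
  rw [hft]
  by_cases htk : (t : ℕ) = (k : ℕ)
  · rw [dif_pos htk]
    have : Fin.cast h t = Fin.cast h k := by ext; simpa using htk
    rw [this, Fin.cycleRange_self, permLift_zero]
    rw [show ((j.cycleRange⁻¹ : Perm (Fin (N+1))) : Fin (N+1) → Fin (N+1)) = j.cycleRange.symm from rfl,
      Fin.cycleRange_symm_zero j, hrw]
  · rw [dif_neg htk]
    have key : Fin.cast h t = (Fin.cast h k).succAbove
        ⟨if (t : ℕ) < (k : ℕ) then (t : ℕ) else (t : ℕ) - 1, by
          have := t.isLt; have := k.isLt; split_ifs <;> omega⟩ := by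
      ext
      rw [val_sA]
      simp only [Fin.coe_cast]
      split_ifs <;> omega
    rw [key, Fin.cycleRange_succAbove, permLift_succ]
    rw [show ((j.cycleRange⁻¹ : Perm (Fin (N+1))) : Fin (N+1) → Fin (N+1)) = j.cycleRange.symm from rfl,
      Fin.cycleRange_symm_succ j]
    rw [hrw]

lemma permJ_sign {M N : ℕ} (h : M = N+1) (j : Fin (N+1)) (e : Perm (Fin N)) (k : Fin M) :
    ((Equiv.Perm.sign (permJ h j e k) : ℤ) : ℝ) =
      (-1 : ℝ) ^ (j : ℕ) * (-1 : ℝ) ^ (k : ℕ) * ((Equiv.Perm.sign e : ℤ) : ℝ) := by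
  rw [permJ, Equiv.Perm.sign_permCongr, map_mul, map_mul, sign_permLift, Fin.sign_cycleRange,
    Equiv.Perm.sign_inv, Fin.sign_cycleRange]
  rw [Units.val_mul, Int.cast_mul, Units.val_mul, Int.cast_mul, Fin.coe_cast,
    sign_coe_pow, sign_coe_pow]
  ring

lemma sum_permJ {M N : ℕ} (h : M = N+1) (k : Fin M) (f : Perm (Fin M) → ℝ) :
    ∑ σ : Perm (Fin M), f σ =
      ∑ j : Fin (N+1), ∑ e : Perm (Fin N), f (permJ h j e k) := by
  have hb : Function.Bijective (fun je : Fin (N+1) × Perm (Fin N) => permJ h je.1 je.2 k) := ?_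
  · rw [(Fintype.sum_bijective _ hb (fun je => f (permJ h je.1 je.2 k)) f (fun _ => rfl)).symm,
      Fintype.sum_prod_type]
  rw [Fintype.bijective_iff_injective_and_card]
  refine ⟨?_, by subst h; simp [Fintype.card_perm, Nat.factorial_succ]⟩
  rintro ⟨j, e⟩ ⟨j', e'⟩ hh
  simp only at hh
  have hj : j = j' := by
    have h1 := permJ_val h j e k k
    have h2 := permJ_val h j' e' k k
    rw [dif_pos rfl] at h1 h2
    rw [hh, h2] at h1
    exact Fin.ext h1.symm
  subst hj
  have he : e = e' := by
    ext u
    set t : Fin M := Fin.cast h.symm ((Fin.cast h k).succAbove u) with ht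
    have htv : (t : ℕ) = if (u : ℕ) < (k : ℕ) then (u : ℕ) else (u : ℕ) + 1 := by
      rw [ht]; simp [val_sA]
    have hne : ¬ (t : ℕ) = (k : ℕ) := by rw [htv]; split_ifs <;> omega
    have e1 := permJ_val h j e k t
    have e2 := permJ_val h j e' k t
    rw [hh, e2, dif_neg hne] at e1
    simp only [dif_neg hne] at e1
    have hu : (⟨if (t : ℕ) < (k : ℕ) then (t : ℕ) else (t : ℕ) - 1, by
        have := u.isLt; have := k.isLt; rw [htv]; split_ifs <;> omega⟩ : Fin N) = u := by
      ext; simp only [htv]; split_ifs <;> omega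
    rw [hu] at e1
    rw [val_sA, val_sA] at e1
    split_ifs at e1 <;> omega
  rw [he]

end Infra

section Layer2

variable {n : ℕ}

/-- Extend a `Fin`-indexed family by zero. -/
def nf {α : Type*} [Zero α] {m : ℕ} (y : Fin m → α) : ℕ → α :=
  fun a => if h : a < m then y ⟨a, h⟩ else 0

lemma nf_apply {α : Type*} [Zero α] {m : ℕ} (y : Fin m → α) (v : Fin m) :
    y v = nf y (v : ℕ) := by
  rw [nf, dif_pos v.isLt]

lemma nf_lt {α : Type*} [Zero α] {m : ℕ} (y : Fin m → α) {a : ℕ} (ha : a < m) :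
    nf y a = y ⟨a, ha⟩ := dif_pos ha

/-- `ℕ`-valued version of a permutation of `Fin W` (junk value `0` out of range). -/
def pef {W : ℕ} (e : Equiv.Perm (Fin W)) : ℕ → ℕ := nf (fun v : Fin W => (e v : ℕ))

lemma pef_lt {W : ℕ} (e : Equiv.Perm (Fin W)) {a : ℕ} (ha : a < W) :
    pef e a = (e ⟨a, ha⟩ : ℕ) := dif_pos ha

lemma pef_bound {W : ℕ} (e : Equiv.Perm (Fin W)) {a : ℕ} (ha : a < W) :
    pef e a < W := by rw [pef_lt e ha]; exact (e ⟨a, ha⟩).isLt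

/-- `ℕ`-valued version of `Fin.succAbove`. -/
def saF (jv a : ℕ) : ℕ := if a < jv then a else a + 1

lemma val_sA' {N : ℕ} (p : Fin (N+1)) (i : Fin N) :
    (p.succAbove i : ℕ) = saF (p : ℕ) (i : ℕ) := val_sA p i

lemma permI_val' {M N : ℕ} (h : M = N+1) (m : Fin M) (e : Equiv.Perm (Fin N)) (t : Fin M) :
    (permI h m e t : ℕ) =
      if (t : ℕ) = (m : ℕ) then 0
      else pef e (if (t : ℕ) < (m : ℕ) then (t : ℕ) else (t : ℕ) - 1) + 1 := by
  rw [permI_val]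
  split_ifs with h1 h2 <;>
    first
      | rfl
      | rw [pef_lt e (by have := t.isLt; have := m.isLt; omega)]

lemma permJ_val' {M N : ℕ} (h : M = N+1) (j : Fin (N+1)) (e : Equiv.Perm (Fin N)) (k : Fin M)
    (t : Fin M) :
    (permJ h j e k t : ℕ) =
      if (t : ℕ) = (k : ℕ) then (j : ℕ)
      else saF (j : ℕ) (pef e (if (t : ℕ) < (k : ℕ) then (t : ℕ) else (t : ℕ) - 1)) := by
  rw [permJ_val]
  split_ifs with h1 h2 <;>
    first
      | rfl
      | rw [val_sA', pef_lt e (by have := t.isLt; have := k.isLt; omega)]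

lemma cons_apply_nf {m : ℕ} (v : V n) (w : Fin m → V n) (t : Fin (m+1)) :
    (Fin.cons v w : Fin (m+1) → V n) t = if (t : ℕ) = 0 then v else nf w ((t : ℕ) - 1) := by
  rw [cons_apply_val]
  split_ifs with h1
  · rfl
  · rw [nf_lt w (by have := t.isLt; omega)]

lemma bianchi_apply {P Q : ℕ} (W : ℕ) (hW : Q = W+1) (φ : DF n P Q)
    (x : Fin (P+1) → V n) (y : Fin (Q-1) → V n) :
    bianchi φ x y = ∑ j : Fin (P+1), (-1:ℝ)^((j:ℕ)+1) *
      φ (fun i => x (j.succAbove i))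
        (fun t => if (t : ℕ) = 0 then x j else nf y ((t : ℕ) - 1)) := by
  subst hW
  show (∑ j : Fin (P+1), (-1:ℝ)^((j:ℕ)+1) *
      φ (fun i => x (j.succAbove i)) (Fin.cons (x j) y)) = _
  refine Finset.sum_congr rfl fun j _ => ?_
  exact congrArg _ (congrArg _ (funext fun t => cons_apply_nf (x j) y t))

/-- Canonical triple sum appearing in `Bω · θ`. -/
noncomputable def T1 (p q r s W : ℕ) (ω : DF n p q) (θ : DF n r s)
    (x : Fin ((p+r)+1) → V n) (y : Fin ((q+s)-1) → V n) : ℝ :=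
  ∑ j : Fin ((p+r)+1), ∑ σ : Equiv.Perm (Fin (p+r)), ∑ e : Equiv.Perm (Fin W),
    (-1:ℝ)^((j:ℕ)+1) * ((Equiv.Perm.sign σ : ℤ):ℝ) * ((Equiv.Perm.sign e : ℤ):ℝ) *
      ω (fun i => x (j.succAbove (σ (Fin.castAdd r i))))
        (fun t : Fin q => if (t:ℕ) = 0 then x j else nf y (pef e ((t:ℕ)-1))) *
      θ (fun i => x (j.succAbove (σ (Fin.natAdd p i))))
        (fun u : Fin s => nf y (pef e (q-1+(u:ℕ))))

/-- Canonical triple sum appearing in `ω · Bθ`. -/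
noncomputable def T2 (p q r s W : ℕ) (ω : DF n p q) (θ : DF n r s)
    (x : Fin ((p+r)+1) → V n) (y : Fin ((q+s)-1) → V n) : ℝ :=
  ∑ j : Fin ((p+r)+1), ∑ σ : Equiv.Perm (Fin (p+r)), ∑ e : Equiv.Perm (Fin W),
    (-1:ℝ)^((j:ℕ)+1) * ((Equiv.Perm.sign σ : ℤ):ℝ) * ((Equiv.Perm.sign e : ℤ):ℝ) *
      ω (fun i => x (j.succAbove (σ (Fin.castAdd r i))))
        (fun t : Fin q => nf y (pef e (t:ℕ))) *
      θ (fun i => x (j.succAbove (σ (Fin.natAdd p i))))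
        (fun u : Fin s => if (u:ℕ) = 0 then x j else nf y (pef e (q+(u:ℕ)-1)))

lemma mul_zero_left {p q r s : ℕ} (θ : DF n r s) : mul (0 : DF n p q) θ = 0 := by
  funext x y
  simp [mul]

lemma mul_zero_right {p q r s : ℕ} (ω : DF n p q) : mul ω (0 : DF n r s) = 0 := by
  funext x y
  simp [mul]

lemma DFcast_zero {p q p' q' : ℕ} (h1 : p = p') (h2 : q = q') :
    DFcast h1 h2 (0 : DF n p q) = 0 := rfl

lemma emb_apply_self {p q : ℕ} (ω : DF n p q) : emb p q ω p q = ω := by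
  rw [emb, dif_pos ⟨rfl, rfl⟩]
  funext x y
  rw [DFcast]
  congr

lemma emb_zero_apply (p q p' q' : ℕ) : emb p q (0 : DF n p q) p' q' = 0 := by
  rw [emb]
  split_ifs with h
  · exact DFcast_zero h.1 h.2
  · rfl

end Layer2

section Layer3

variable {n : ℕ}

lemma pef_coe {W : ℕ} (e : Equiv.Perm (Fin W)) (v : Fin W) : pef e (v : ℕ) = (e v : ℕ) := by
  rw [pef_lt e v.isLt]

/-- Transport of a permutation along an equality of sizes. -/
def permCast {A B : ℕ} (h : A = B) (e : Equiv.Perm (Fin B)) : Equiv.Perm (Fin A) :=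
  (finCongr h.symm).permCongr e

lemma permCast_val {A B : ℕ} (h : A = B) (e : Equiv.Perm (Fin B)) (t : Fin A) :
    (permCast h e t : ℕ) = pef e (t : ℕ) := by
  subst h
  rw [permCast, finCongr_refl, Equiv.permCongr_apply]
  simp [pef_coe]

lemma permCast_sign {A B : ℕ} (h : A = B) (e : Equiv.Perm (Fin B)) :
    ((Equiv.Perm.sign (permCast h e) : ℤ) : ℝ) = ((Equiv.Perm.sign e : ℤ) : ℝ) := by
  rw [permCast, Equiv.Perm.sign_permCongr]

lemma sum_permCast {A B : ℕ} (h : A = B) (f : Equiv.Perm (Fin A) → ℝ) :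
    ∑ ρ : Equiv.Perm (Fin A), f ρ = ∑ e : Equiv.Perm (Fin B), f (permCast h e) := by
  subst h
  refine Finset.sum_congr rfl fun e _ => ?_
  exact congrArg f (Equiv.ext fun t => Fin.ext (by rw [permCast_val rfl e t, pef_coe])).symm

lemma neg_one_pow_cancel (a : ℕ) : (-1:ℝ)^a * (-1:ℝ)^a = 1 := by
  rw [← pow_add]
  exact Even.neg_one_pow ⟨a, rfl⟩

end Layer3

section E2sec

variable {n : ℕ}

lemma E2 (p q r s W : ℕ) (hW : q + s = W + 1) (hs : 1 ≤ s)
    (ω : DF n p q) (θ : DF n r s) (x : Fin ((p+r)+1) → V n) (y : Fin ((q+s)-1) → V n)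
    (h1 : p+(r+1) = (p+r)+1) (h2 : q+(s-1) = (q+s)-1) :
    DFcast h1 h2 (mul ω (bianchi θ)) x y
      = ((p.factorial * (r+1).factorial * q.factorial * (s-1).factorial : ℕ) : ℝ)⁻¹ *
        (((r:ℝ)+1) * ((-1:ℝ)^p * T2 p q r s W ω θ x y)) := by
  have hA : q + (s-1) = W := by omega
  simp only [DFcast, mul]
  refine congrArg (fun z => (((p.factorial * (r+1).factorial * q.factorial * (s-1).factorial : ℕ)) : ℝ)⁻¹ * z) ?_
  simp only [sum_permCast hA]
  simp only [bianchi_apply (s-1) (show s = (s-1)+1 by omega)]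
  simp only [Finset.mul_sum]
  conv_lhs => enter [2, σ1]; rw [Finset.sum_comm]
  rw [Finset.sum_comm]
  rw [show ((r:ℝ)+1) * ((-1:ℝ)^p * T2 p q r s W ω θ x y)
      = ∑ _k : Fin (r+1), ((-1:ℝ)^p * T2 p q r s W ω θ x y) from by
    rw [Finset.sum_const, Finset.card_univ, Fintype.card_fin, nsmul_eq_mul]; push_cast; ring]
  refine Finset.sum_congr rfl fun k _ => ?_
  rw [sum_permJ h1 (Fin.natAdd p k)]
  rw [T2]
  rw [Finset.mul_sum]
  refine Finset.sum_congr rfl fun j _ => ?_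
  rw [Finset.mul_sum]
  refine Finset.sum_congr rfl fun σ _ => ?_
  rw [Finset.mul_sum]
  refine Finset.sum_congr rfl fun e _ => ?_
  have hx1 : ∀ i : Fin p, x (Fin.cast h1 (permJ h1 j σ (Fin.natAdd p k) (Fin.castAdd (r+1) i)))
      = x (j.succAbove (σ (Fin.castAdd r i))) := by
    intro i
    refine congrArg x (Fin.ext ?_)
    rw [Fin.coe_cast, permJ_val', val_sA', ← pef_coe σ (Fin.castAdd r i)]
    simp only [Fin.coe_castAdd, Fin.coe_natAdd]
    rw [if_neg (by have := i.isLt; omega), if_pos (by have := i.isLt; omega)]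
  have hy1 : ∀ t : Fin q, y (Fin.cast h2 (permCast hA e (Fin.castAdd (s-1) t)))
      = nf y (pef e (t:ℕ)) := by
    intro t
    rw [nf_apply y (Fin.cast h2 (permCast hA e (Fin.castAdd (s-1) t)))]
    exact congrArg (nf y) (by rw [Fin.coe_cast, permCast_val, Fin.coe_castAdd])
  have hhd : x (Fin.cast h1 (permJ h1 j σ (Fin.natAdd p k) (Fin.natAdd p k))) = x j := by
    refine congrArg x (Fin.ext ?_)
    rw [Fin.coe_cast, permJ_val', if_pos rfl]
  have hx2 : ∀ i : Fin r,
      x (Fin.cast h1 (permJ h1 j σ (Fin.natAdd p k) (Fin.natAdd p (k.succAbove i))))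
      = x (j.succAbove (σ (Fin.natAdd p i))) := by
    intro i
    by_cases hik : (i:ℕ) < (k:ℕ)
    · have hval : ((Fin.natAdd p (k.succAbove i)) : ℕ) = p + (i:ℕ) := by
        rw [Fin.coe_natAdd, val_sA']; simp only [saF]; rw [if_pos hik]
      refine congrArg x (Fin.ext ?_)
      rw [Fin.coe_cast, permJ_val', hval]
      simp only [Fin.coe_natAdd]
      rw [if_neg (by omega), if_pos (by omega)]
      rw [val_sA', ← pef_coe σ (Fin.natAdd p i)]
      simp only [Fin.coe_natAdd]
    · have hval : ((Fin.natAdd p (k.succAbove i)) : ℕ) = p + (i:ℕ) + 1 := by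
        rw [Fin.coe_natAdd, val_sA']; simp only [saF]; rw [if_neg hik]; omega
      refine congrArg x (Fin.ext ?_)
      rw [Fin.coe_cast, permJ_val', hval]
      simp only [Fin.coe_natAdd]
      rw [if_neg (by have := k.isLt; omega), if_neg (by omega)]
      rw [show p + (i:ℕ) + 1 - 1 = p + (i:ℕ) from by omega]
      rw [val_sA', ← pef_coe σ (Fin.natAdd p i)]
      simp only [Fin.coe_natAdd]
  have hy2 : ∀ t : Fin s, ¬ (t:ℕ) = 0 →
      nf (fun u : Fin (s-1) => y (Fin.cast h2 (permCast hA e (Fin.natAdd q u)))) ((t:ℕ)-1)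
      = nf y (pef e (q+(t:ℕ)-1)) := by
    intro t ht
    rw [nf_lt _ (by have := t.isLt; omega)]
    rw [nf_apply y (Fin.cast h2 (permCast hA e (Fin.natAdd q ⟨(t:ℕ)-1, by have := t.isLt; omega⟩)))]
    refine congrArg (nf y) ?_
    rw [Fin.coe_cast, permCast_val, Fin.coe_natAdd]
    refine congrArg (pef e) ?_
    show q + ((t:ℕ)-1) = q + (t:ℕ) - 1
    omega
  have hω : ω (fun i => x (Fin.cast h1 (permJ h1 j σ (Fin.natAdd p k) (Fin.castAdd (r+1) i))))
        (fun t => y (Fin.cast h2 (permCast hA e (Fin.castAdd (s-1) t))))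
      = ω (fun i => x (j.succAbove (σ (Fin.castAdd r i)))) (fun t => nf y (pef e (t:ℕ))) :=
    congrArg₂ ω (funext hx1) (funext hy1)
  have hθ : θ (fun i => x (Fin.cast h1 (permJ h1 j σ (Fin.natAdd p k) (Fin.natAdd p (k.succAbove i)))))
        (fun t => if (t:ℕ) = 0 then x (Fin.cast h1 (permJ h1 j σ (Fin.natAdd p k) (Fin.natAdd p k)))
          else nf (fun u => y (Fin.cast h2 (permCast hA e (Fin.natAdd q u)))) ((t:ℕ)-1))
      = θ (fun i => x (j.succAbove (σ (Fin.natAdd p i))))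
        (fun u : Fin s => if (u:ℕ) = 0 then x j else nf y (pef e (q+(u:ℕ)-1))) := by
    refine congrArg₂ θ (funext hx2) (funext fun t => ?_)
    by_cases ht : (t:ℕ) = 0
    · rw [if_pos ht, if_pos ht, hhd]
    · rw [if_neg ht, if_neg ht]
      exact hy2 t ht
  rw [hω, hθ, permJ_sign, permCast_sign, Fin.coe_natAdd]
  generalize ω (fun i => x (j.succAbove (σ (Fin.castAdd r i)))) (fun t => nf y (pef e (t:ℕ))) = O
  generalize θ (fun i => x (j.succAbove (σ (Fin.natAdd p i))))
    (fun u : Fin s => if (u:ℕ) = 0 then x j else nf y (pef e (q+(u:ℕ)-1))) = T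
  generalize ((Equiv.Perm.sign σ : ℤ) : ℝ) = S
  generalize ((Equiv.Perm.sign e : ℤ) : ℝ) = Se
  linear_combination (-( (-1:ℝ)^(j:ℕ) * (-1:ℝ)^p * S * Se * O * T)) * neg_one_pow_cancel (k:ℕ)

end E2sec

section E1sec

variable {n : ℕ}

lemma E1 (p q r s W : ℕ) (hW : q + s = W + 1) (hq : 1 ≤ q)
    (ω : DF n p q) (θ : DF n r s) (x : Fin ((p+r)+1) → V n) (y : Fin ((q+s)-1) → V n)
    (h1 : (p+1)+r = (p+r)+1) (h2 : (q-1)+s = (q+s)-1) :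
    DFcast h1 h2 (mul (bianchi ω) θ) x y
      = (((p+1).factorial * r.factorial * (q-1).factorial * s.factorial : ℕ) : ℝ)⁻¹ *
        (((p:ℝ)+1) * T1 p q r s W ω θ x y) := by
  have hA : (q-1) + s = W := by omega
  simp only [DFcast, mul]
  refine congrArg (fun z => (((p+1).factorial * r.factorial * (q-1).factorial * s.factorial : ℕ) : ℝ)⁻¹ * z) ?_
  simp only [sum_permCast hA]
  simp only [bianchi_apply (q-1) (show q = (q-1)+1 by omega)]
  simp only [Finset.mul_sum, Finset.sum_mul]
  conv_lhs => enter [2, σ1]; rw [Finset.sum_comm]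
  rw [Finset.sum_comm]
  rw [show ((p:ℝ)+1) * T1 p q r s W ω θ x y
      = ∑ _k : Fin (p+1), T1 p q r s W ω θ x y from by
    rw [Finset.sum_const, Finset.card_univ, Fintype.card_fin, nsmul_eq_mul]; push_cast; ring]
  refine Finset.sum_congr rfl fun k _ => ?_
  rw [sum_permJ h1 (Fin.castAdd r k)]
  rw [T1]
  refine Finset.sum_congr rfl fun j _ => ?_
  refine Finset.sum_congr rfl fun σ _ => ?_
  refine Finset.sum_congr rfl fun e _ => ?_
  have hx1 : ∀ i : Fin p,
      x (Fin.cast h1 (permJ h1 j σ (Fin.castAdd r k) (Fin.castAdd r (k.succAbove i))))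
      = x (j.succAbove (σ (Fin.castAdd r i))) := by
    intro i
    by_cases hik : (i:ℕ) < (k:ℕ)
    · have hval : ((Fin.castAdd r (k.succAbove i)) : ℕ) = (i:ℕ) := by
        rw [Fin.coe_castAdd, val_sA']; simp only [saF]; rw [if_pos hik]
      refine congrArg x (Fin.ext ?_)
      rw [Fin.coe_cast, permJ_val', hval]
      simp only [Fin.coe_castAdd]
      rw [if_neg (by omega), if_pos (by omega)]
      rw [val_sA', ← pef_coe σ (Fin.castAdd r i)]
      simp only [Fin.coe_castAdd]
    · have hval : ((Fin.castAdd r (k.succAbove i)) : ℕ) = (i:ℕ) + 1 := by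
        rw [Fin.coe_castAdd, val_sA']; simp only [saF]; rw [if_neg hik]
      refine congrArg x (Fin.ext ?_)
      rw [Fin.coe_cast, permJ_val', hval]
      simp only [Fin.coe_castAdd]
      rw [if_neg (by omega), if_neg (by omega)]
      rw [show (i:ℕ) + 1 - 1 = (i:ℕ) from by omega]
      rw [val_sA', ← pef_coe σ (Fin.castAdd r i)]
      simp only [Fin.coe_castAdd]
  have hhd : x (Fin.cast h1 (permJ h1 j σ (Fin.castAdd r k) (Fin.castAdd r k))) = x j := by
    refine congrArg x (Fin.ext ?_)
    rw [Fin.coe_cast, permJ_val', if_pos rfl]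
  have hy1 : ∀ t : Fin q, ¬ (t:ℕ) = 0 →
      nf (fun u : Fin (q-1) => y (Fin.cast h2 (permCast hA e (Fin.castAdd s u)))) ((t:ℕ)-1)
      = nf y (pef e ((t:ℕ)-1)) := by
    intro t ht
    rw [nf_lt _ (by have := t.isLt; omega)]
    rw [nf_apply y (Fin.cast h2 (permCast hA e (Fin.castAdd s ⟨(t:ℕ)-1, by have := t.isLt; omega⟩)))]
    refine congrArg (nf y) ?_
    rw [Fin.coe_cast, permCast_val, Fin.coe_castAdd]
  have hx2 : ∀ i : Fin r,
      x (Fin.cast h1 (permJ h1 j σ (Fin.castAdd r k) (Fin.natAdd (p+1) i)))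
      = x (j.succAbove (σ (Fin.natAdd p i))) := by
    intro i
    refine congrArg x (Fin.ext ?_)
    rw [Fin.coe_cast, permJ_val']
    simp only [Fin.coe_natAdd, Fin.coe_castAdd]
    rw [if_neg (by have := k.isLt; omega), if_neg (by have := k.isLt; omega)]
    rw [show p + 1 + (i:ℕ) - 1 = p + (i:ℕ) from by omega]
    rw [val_sA', ← pef_coe σ (Fin.natAdd p i)]
    simp only [Fin.coe_natAdd]
  have hy2 : ∀ u : Fin s, y (Fin.cast h2 (permCast hA e (Fin.natAdd (q-1) u)))
      = nf y (pef e (q-1+(u:ℕ))) := by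
    intro u
    rw [nf_apply y (Fin.cast h2 (permCast hA e (Fin.natAdd (q-1) u)))]
    exact congrArg (nf y) (by rw [Fin.coe_cast, permCast_val, Fin.coe_natAdd])
  have hω : ω (fun i => x (Fin.cast h1 (permJ h1 j σ (Fin.castAdd r k) (Fin.castAdd r (k.succAbove i)))))
        (fun t => if (t:ℕ) = 0 then x (Fin.cast h1 (permJ h1 j σ (Fin.castAdd r k) (Fin.castAdd r k)))
          else nf (fun u => y (Fin.cast h2 (permCast hA e (Fin.castAdd s u)))) ((t:ℕ)-1))
      = ω (fun i => x (j.succAbove (σ (Fin.castAdd r i))))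
        (fun t : Fin q => if (t:ℕ) = 0 then x j else nf y (pef e ((t:ℕ)-1))) := by
    refine congrArg₂ ω (funext hx1) (funext fun t => ?_)
    by_cases ht : (t:ℕ) = 0
    · rw [if_pos ht, if_pos ht, hhd]
    · rw [if_neg ht, if_neg ht]
      exact hy1 t ht
  have hθ : θ (fun i => x (Fin.cast h1 (permJ h1 j σ (Fin.castAdd r k) (Fin.natAdd (p+1) i))))
        (fun u => y (Fin.cast h2 (permCast hA e (Fin.natAdd (q-1) u))))
      = θ (fun i => x (j.succAbove (σ (Fin.natAdd p i))))
        (fun u : Fin s => nf y (pef e (q-1+(u:ℕ)))) :=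
    congrArg₂ θ (funext hx2) (funext hy2)
  rw [hω, hθ, permJ_sign, permCast_sign, Fin.coe_castAdd]
  generalize ω (fun i => x (j.succAbove (σ (Fin.castAdd r i))))
    (fun t : Fin q => if (t:ℕ) = 0 then x j else nf y (pef e ((t:ℕ)-1))) = O
  generalize θ (fun i => x (j.succAbove (σ (Fin.natAdd p i))))
    (fun u : Fin s => nf y (pef e (q-1+(u:ℕ)))) = T
  generalize ((Equiv.Perm.sign σ : ℤ) : ℝ) = S
  generalize ((Equiv.Perm.sign e : ℤ) : ℝ) = Se
  linear_combination (-( (-1:ℝ)^(j:ℕ) * S * Se * O * T)) * neg_one_pow_cancel (k:ℕ)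

end E1sec

section MainSec

variable {n : ℕ}

set_option maxHeartbeats 2000000 in
lemma MAIN (p q r s W : ℕ) (hW : q + s = W + 1)
    (ω : DF n p q) (θ : DF n r s) (hω : IsDF ω) (hθ : IsDF θ)
    (x : Fin ((p+r)+1) → V n) (y : Fin ((q+s)-1) → V n) :
    bianchi (mul ω θ) x y
      = ((p.factorial * r.factorial * q.factorial * s.factorial : ℕ) : ℝ)⁻¹ *
        ((q:ℝ) * T1 p q r s W ω θ x y + (-1:ℝ)^q * (s:ℝ) * T2 p q r s W ω θ x y) := by
  obtain ⟨F, hF⟩ := hω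
  obtain ⟨G, hG⟩ := hθ
  rw [bianchi_apply W hW (mul ω θ) x y]
  simp only [mul]
  simp only [sum_permI hW]
  conv_lhs => enter [2, j, 2, 2, 2, σ]; rw [Fin.sum_univ_add]
  have hblock1 : ∀ (j : Fin ((p+r)+1)) (σ : Equiv.Perm (Fin (p+r))) (t₀ : Fin q)
      (e : Equiv.Perm (Fin W)),
      (((Equiv.Perm.sign σ : ℤ):ℝ) * ((Equiv.Perm.sign (permI hW (Fin.castAdd s t₀) e) : ℤ):ℝ) *
          ω (fun i => x (j.succAbove (σ (Fin.castAdd r i))))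
            (fun t => if ((permI hW (Fin.castAdd s t₀) e) (Fin.castAdd s t) : ℕ) = 0 then x j
              else nf y (((permI hW (Fin.castAdd s t₀) e) (Fin.castAdd s t) : ℕ) - 1))) *
        θ (fun i => x (j.succAbove (σ (Fin.natAdd p i))))
          (fun t => if ((permI hW (Fin.castAdd s t₀) e) (Fin.natAdd q t) : ℕ) = 0 then x j
            else nf y (((permI hW (Fin.castAdd s t₀) e) (Fin.natAdd q t) : ℕ) - 1))
      = ((Equiv.Perm.sign σ : ℤ):ℝ) * ((Equiv.Perm.sign e : ℤ):ℝ) *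
          ω (fun i => x (j.succAbove (σ (Fin.castAdd r i))))
            (fun t : Fin q => if (t:ℕ) = 0 then x j else nf y (pef e ((t:ℕ)-1))) *
          θ (fun i => x (j.succAbove (σ (Fin.natAdd p i))))
            (fun u : Fin s => nf y (pef e (q-1+(u:ℕ)))) := by
    intro j σ t₀ e
    have hZ : (fun t : Fin s =>
          if ((permI hW (Fin.castAdd s t₀) e) (Fin.natAdd q t) : ℕ) = 0 then x j
          else nf y (((permI hW (Fin.castAdd s t₀) e) (Fin.natAdd q t) : ℕ) - 1))
        = (fun u : Fin s => nf y (pef e (q-1+(u:ℕ)))) := by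
      funext t
      have hv : ((permI hW (Fin.castAdd s t₀) e) (Fin.natAdd q t) : ℕ)
          = pef e (q-1+(t:ℕ)) + 1 := by
        rw [permI_val']
        simp only [Fin.coe_natAdd, Fin.coe_castAdd]
        rw [if_neg (by have := t₀.isLt; omega), if_neg (by have := t₀.isLt; omega)]
        exact congrArg (fun a => pef e a + 1) (by have := t₀.isLt; omega)
      rw [hv, if_neg (by omega),
        show pef e (q-1+(t:ℕ)) + 1 - 1 = pef e (q-1+(t:ℕ)) from by omega]
    have hY : (fun t : Fin q =>
          if ((permI hW (Fin.castAdd s t₀) e) (Fin.castAdd s t) : ℕ) = 0 then x j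
          else nf y (((permI hW (Fin.castAdd s t₀) e) (Fin.castAdd s t) : ℕ) - 1))
        = (fun t' : Fin q => if (t':ℕ) = 0 then x j else nf y (pef e ((t':ℕ)-1)))
            ∘ (t₀.cycleRange) := by
      funext t
      have hc := cycleRange_val t₀ t
      show _ = if ((t₀.cycleRange t : ℕ)) = 0 then x j else nf y (pef e ((t₀.cycleRange t : ℕ)-1))
      by_cases h1 : (t:ℕ) = (t₀:ℕ)
      · have hv : ((permI hW (Fin.castAdd s t₀) e) (Fin.castAdd s t) : ℕ) = 0 := by
          rw [permI_val']
          simp only [Fin.coe_castAdd]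
          rw [if_pos h1]
        have hc0 : (t₀.cycleRange t : ℕ) = 0 := by rw [hc, if_neg (by omega), if_pos h1]
        rw [hv, hc0, if_pos rfl, if_pos rfl]
      · have hv : ((permI hW (Fin.castAdd s t₀) e) (Fin.castAdd s t) : ℕ)
            = pef e (if (t:ℕ) < (t₀:ℕ) then (t:ℕ) else (t:ℕ)-1) + 1 := by
          rw [permI_val']
          simp only [Fin.coe_castAdd]
          rw [if_neg h1]
        rw [hv, if_neg (by omega),
          show pef e (if (t:ℕ) < (t₀:ℕ) then (t:ℕ) else (t:ℕ)-1) + 1 - 1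
            = pef e (if (t:ℕ) < (t₀:ℕ) then (t:ℕ) else (t:ℕ)-1) from by omega]
        by_cases h2 : (t:ℕ) < (t₀:ℕ)
        · have hcv : (t₀.cycleRange t : ℕ) = (t:ℕ)+1 := by rw [hc, if_pos h2]
          rw [hcv, if_pos h2, if_neg (by omega),
            show (t:ℕ) + 1 - 1 = (t:ℕ) from by omega]
        · have hcv : (t₀.cycleRange t : ℕ) = (t:ℕ) := by rw [hc, if_neg h2, if_neg h1]
          rw [hcv, if_neg h2, if_neg (by omega)]
    have hmove : ω (fun i => x (j.succAbove (σ (Fin.castAdd r i))))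
          (fun t : Fin q =>
            if ((permI hW (Fin.castAdd s t₀) e) (Fin.castAdd s t) : ℕ) = 0 then x j
            else nf y (((permI hW (Fin.castAdd s t₀) e) (Fin.castAdd s t) : ℕ) - 1))
        = (-1:ℝ)^(t₀:ℕ) * ω (fun i => x (j.succAbove (σ (Fin.castAdd r i))))
            (fun t : Fin q => if (t:ℕ) = 0 then x j else nf y (pef e ((t:ℕ)-1))) := by
      rw [hY, hF, hF, AlternatingMap.map_perm, Fin.sign_cycleRange, units_smul_real,
        sign_coe_pow]
    rw [hZ, hmove, permI_sign, Fin.coe_castAdd]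
    generalize ((Equiv.Perm.sign σ : ℤ) : ℝ) = S
    generalize ((Equiv.Perm.sign e : ℤ) : ℝ) = Se
    generalize ω (fun i => x (j.succAbove (σ (Fin.castAdd r i))))
      (fun t : Fin q => if (t:ℕ) = 0 then x j else nf y (pef e ((t:ℕ)-1))) = O
    generalize θ (fun i => x (j.succAbove (σ (Fin.natAdd p i))))
      (fun u : Fin s => nf y (pef e (q-1+(u:ℕ)))) = T
    linear_combination (S * Se * O * T) * neg_one_pow_cancel (t₀:ℕ)
  have hblock2 : ∀ (j : Fin ((p+r)+1)) (σ : Equiv.Perm (Fin (p+r))) (m₂ : Fin s)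
      (e : Equiv.Perm (Fin W)),
      (((Equiv.Perm.sign σ : ℤ):ℝ) * ((Equiv.Perm.sign (permI hW (Fin.natAdd q m₂) e) : ℤ):ℝ) *
          ω (fun i => x (j.succAbove (σ (Fin.castAdd r i))))
            (fun t => if ((permI hW (Fin.natAdd q m₂) e) (Fin.castAdd s t) : ℕ) = 0 then x j
              else nf y (((permI hW (Fin.natAdd q m₂) e) (Fin.castAdd s t) : ℕ) - 1))) *
        θ (fun i => x (j.succAbove (σ (Fin.natAdd p i))))
          (fun t => if ((permI hW (Fin.natAdd q m₂) e) (Fin.natAdd q t) : ℕ) = 0 then x j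
            else nf y (((permI hW (Fin.natAdd q m₂) e) (Fin.natAdd q t) : ℕ) - 1))
      = (-1:ℝ)^q * (((Equiv.Perm.sign σ : ℤ):ℝ) * ((Equiv.Perm.sign e : ℤ):ℝ) *
          ω (fun i => x (j.succAbove (σ (Fin.castAdd r i))))
            (fun t : Fin q => nf y (pef e (t:ℕ))) *
          θ (fun i => x (j.succAbove (σ (Fin.natAdd p i))))
            (fun u : Fin s => if (u:ℕ) = 0 then x j else nf y (pef e (q+(u:ℕ)-1)))) := by
    intro j σ m₂ e
    have hY : (fun t : Fin q =>
          if ((permI hW (Fin.natAdd q m₂) e) (Fin.castAdd s t) : ℕ) = 0 then x j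
          else nf y (((permI hW (Fin.natAdd q m₂) e) (Fin.castAdd s t) : ℕ) - 1))
        = (fun t : Fin q => nf y (pef e (t:ℕ))) := by
      funext t
      have hv : ((permI hW (Fin.natAdd q m₂) e) (Fin.castAdd s t) : ℕ) = pef e (t:ℕ) + 1 := by
        rw [permI_val']
        simp only [Fin.coe_natAdd, Fin.coe_castAdd]
        rw [if_neg (by have := t.isLt; omega), if_pos (by have := t.isLt; omega)]
      rw [hv, if_neg (by omega), show pef e (t:ℕ) + 1 - 1 = pef e (t:ℕ) from by omega]
    have hZ : (fun t : Fin s =>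
          if ((permI hW (Fin.natAdd q m₂) e) (Fin.natAdd q t) : ℕ) = 0 then x j
          else nf y (((permI hW (Fin.natAdd q m₂) e) (Fin.natAdd q t) : ℕ) - 1))
        = (fun u : Fin s => if (u:ℕ) = 0 then x j else nf y (pef e (q+(u:ℕ)-1)))
            ∘ (m₂.cycleRange) := by
      funext t
      have hc := cycleRange_val m₂ t
      show _ = if ((m₂.cycleRange t : ℕ)) = 0 then x j
        else nf y (pef e (q+(m₂.cycleRange t : ℕ)-1))
      by_cases h1 : (t:ℕ) = (m₂:ℕ)
      · have hv : ((permI hW (Fin.natAdd q m₂) e) (Fin.natAdd q t) : ℕ) = 0 := by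
          rw [permI_val']
          simp only [Fin.coe_natAdd]
          rw [if_pos (by omega)]
        have hc0 : (m₂.cycleRange t : ℕ) = 0 := by rw [hc, if_neg (by omega), if_pos h1]
        rw [hv, hc0, if_pos rfl, if_pos rfl]
      · have hv : ((permI hW (Fin.natAdd q m₂) e) (Fin.natAdd q t) : ℕ)
            = pef e (if (t:ℕ) < (m₂:ℕ) then q+(t:ℕ) else q+(t:ℕ)-1) + 1 := by
          rw [permI_val']
          simp only [Fin.coe_natAdd]
          rw [if_neg (by omega)]
          by_cases h2 : (t:ℕ) < (m₂:ℕ)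
          · rw [if_pos (by omega), if_pos h2]
          · rw [if_neg (by omega), if_neg h2]
        rw [hv, if_neg (by omega),
          show pef e (if (t:ℕ) < (m₂:ℕ) then q+(t:ℕ) else q+(t:ℕ)-1) + 1 - 1
            = pef e (if (t:ℕ) < (m₂:ℕ) then q+(t:ℕ) else q+(t:ℕ)-1) from by omega]
        by_cases h2 : (t:ℕ) < (m₂:ℕ)
        · have hcv : (m₂.cycleRange t : ℕ) = (t:ℕ)+1 := by rw [hc, if_pos h2]
          rw [hcv, if_pos h2, if_neg (by omega)]
          exact congrArg (fun a => nf y (pef e a)) (by omega)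
        · have hcv : (m₂.cycleRange t : ℕ) = (t:ℕ) := by rw [hc, if_neg h2, if_neg h1]
          rw [hcv, if_neg h2, if_neg (by omega)]
    have hmove : θ (fun i => x (j.succAbove (σ (Fin.natAdd p i))))
          (fun t : Fin s =>
            if ((permI hW (Fin.natAdd q m₂) e) (Fin.natAdd q t) : ℕ) = 0 then x j
            else nf y (((permI hW (Fin.natAdd q m₂) e) (Fin.natAdd q t) : ℕ) - 1))
        = (-1:ℝ)^(m₂:ℕ) * θ (fun i => x (j.succAbove (σ (Fin.natAdd p i))))
            (fun u : Fin s => if (u:ℕ) = 0 then x j else nf y (pef e (q+(u:ℕ)-1))) := by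
      rw [hZ, hG, hG, AlternatingMap.map_perm, Fin.sign_cycleRange, units_smul_real,
        sign_coe_pow]
    rw [hY, hmove, permI_sign, Fin.coe_natAdd]
    generalize ((Equiv.Perm.sign σ : ℤ) : ℝ) = S
    generalize ((Equiv.Perm.sign e : ℤ) : ℝ) = Se
    generalize ω (fun i => x (j.succAbove (σ (Fin.castAdd r i))))
      (fun t : Fin q => nf y (pef e (t:ℕ))) = O
    generalize θ (fun i => x (j.succAbove (σ (Fin.natAdd p i))))
      (fun u : Fin s => if (u:ℕ) = 0 then x j else nf y (pef e (q+(u:ℕ)-1))) = T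
    rw [pow_add]
    linear_combination ((-1:ℝ)^q * S * Se * O * T) * neg_one_pow_cancel (m₂:ℕ)
  simp only [hblock1, hblock2]
  simp only [Finset.sum_const, Finset.card_univ, Fintype.card_fin, nsmul_eq_mul]
  rw [T1, T2]
  simp only [Finset.mul_sum, mul_add, Finset.sum_add_distrib]
  congr 1
  · refine Finset.sum_congr rfl fun j _ => ?_
    refine Finset.sum_congr rfl fun σ _ => ?_
    refine Finset.sum_congr rfl fun e _ => ?_
    ring
  · refine Finset.sum_congr rfl fun j _ => ?_
    refine Finset.sum_congr rfl fun σ _ => ?_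
    refine Finset.sum_congr rfl fun e _ => ?_
    ring

end MainSec

section FinalSec

variable {n : ℕ}

lemma DFcast_rfl {p q : ℕ} (h1 : p = p) (h2 : q = q) (ω : DF n p q) :
    DFcast h1 h2 ω = ω := by
  funext x y
  rw [DFcast]
  exact congrArg₂ ω (funext fun i => congrArg x (Fin.ext rfl))
    (funext fun u => congrArg y (Fin.ext rfl))

end FinalSec


/-- the first Bianchi sum is a graded derivation:
`B(ω·θ) = Bω·θ + (−1)^{p+q} ω·Bθ`; consequently `Ker B` is closed under multiplication. -/
theorem bianchi_derivation (n p q r s : ℕ) (ω : DF n p q) (θ : DF n r s)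
    (hω : IsDF ω) (hθ : IsDF θ) :
    (emb ((p + r) + 1) ((q + s) - 1) (bianchi (mul ω θ))
      = emb ((p + 1) + r) ((q - 1) + s) (mul (bianchi ω) θ)
        + ((-1 : ℝ)) ^ (p + q) • emb (p + (r + 1)) (q + (s - 1)) (mul ω (bianchi θ))) ∧
    (bianchi ω = 0 → bianchi θ = 0 → bianchi (mul ω θ) = 0) := by
  have HP : emb ((p + r) + 1) ((q + s) - 1) (bianchi (mul ω θ))
      = emb ((p + 1) + r) ((q - 1) + s) (mul (bianchi ω) θ)
        + ((-1 : ℝ)) ^ (p + q) • emb (p + (r + 1)) (q + (s - 1)) (mul ω (bianchi θ)) := by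
    funext p' q'
    simp only [Pi.add_apply, Pi.smul_apply]
    by_cases hL : (p + r) + 1 = p' ∧ (q + s) - 1 = q'
    · obtain ⟨hp', hq'⟩ := hL
      subst hp' hq'
      simp only [emb]
      rw [dif_pos (⟨trivial, trivial⟩ : True ∧ True), DFcast_rfl]
      by_cases hq : q = 0
      · subst hq
        by_cases hs : s = 0
        · subst hs
          rw [dif_pos (⟨by omega, by omega⟩ : ((p+1)+r = (p+r)+1 ∧ (0-1)+0 = (0+0)-1)),
            dif_pos (⟨by omega, by omega⟩ : (p+(r+1) = (p+r)+1 ∧ 0+(0-1) = (0+0)-1))]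
          rw [show bianchi (mul ω θ) = (0 : DF n ((p+r)+1) ((0+0)-1)) from rfl,
            show bianchi ω = (0 : DF n (p+1) (0-1)) from rfl,
            show bianchi θ = (0 : DF n (r+1) (0-1)) from rfl,
            mul_zero_left, mul_zero_right, DFcast_zero, DFcast_zero]
          funext x v
          simp only [Pi.add_apply, Pi.smul_apply, Pi.zero_apply, smul_eq_mul]
          ring
        · -- q = 0, s ≥ 1
          rw [dif_neg (by rintro ⟨hh1, hh2⟩; omega),
            dif_pos (⟨by omega, by omega⟩ : (p+(r+1) = (p+r)+1 ∧ 0+(s-1) = (0+s)-1))]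
          funext x v
          simp only [Pi.add_apply, Pi.smul_apply, Pi.zero_apply, smul_eq_mul]
          rw [MAIN p 0 r s ((0+s)-1) (by omega) ω θ hω hθ x v,
            E2 p 0 r s ((0+s)-1) (by omega) (by omega) ω θ x v _ _]
          have hc2 : ((p.factorial * r.factorial * Nat.factorial 0 * s.factorial : ℕ) : ℝ)⁻¹ * (s:ℝ)
              = ((p.factorial * (r+1).factorial * Nat.factorial 0 * (s-1).factorial : ℕ) : ℝ)⁻¹ * ((r:ℝ)+1) := by
            have h1 : s.factorial = s * (s-1).factorial := (Nat.mul_factorial_pred (by omega)).symm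
            have h2 : (r+1).factorial = (r+1) * r.factorial := Nat.factorial_succ r
            rw [h1, h2]
            push_cast
            have nzp := Nat.cast_ne_zero (R := ℝ) |>.mpr (Nat.factorial_ne_zero p)
            have nzr := Nat.cast_ne_zero (R := ℝ) |>.mpr (Nat.factorial_ne_zero r)
            have nzs := Nat.cast_ne_zero (R := ℝ) |>.mpr (Nat.factorial_ne_zero (s-1))
            have nzs' : (s:ℝ) ≠ 0 := Nat.cast_ne_zero.mpr (by omega)
            field_simp
          generalize T2 p 0 r s ((0+s)-1) ω θ x v = T2v
          generalize hT1 : T1 p 0 r s ((0+s)-1) ω θ x v = T1v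
          linear_combination (T2v) * hc2
            - (T2v * ((p.factorial * (r+1).factorial * Nat.factorial 0 * (s-1).factorial : ℕ) : ℝ)⁻¹ * ((r:ℝ)+1)) * neg_one_pow_cancel p
      · by_cases hs : s = 0
        · subst hs
          rw [dif_pos (⟨by omega, by omega⟩ : ((p+1)+r = (p+r)+1 ∧ (q-1)+0 = (q+0)-1)),
            dif_neg (by rintro ⟨hh1, hh2⟩; omega)]
          funext x v
          simp only [Pi.add_apply, Pi.smul_apply, Pi.zero_apply, smul_eq_mul]
          rw [MAIN p q r 0 ((q+0)-1) (by omega) ω θ hω hθ x v,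
            E1 p q r 0 ((q+0)-1) (by omega) (by omega) ω θ x v _ _]
          have hc1 : ((p.factorial * r.factorial * q.factorial * Nat.factorial 0 : ℕ) : ℝ)⁻¹ * (q:ℝ)
              = (((p+1).factorial * r.factorial * (q-1).factorial * Nat.factorial 0 : ℕ) : ℝ)⁻¹ * ((p:ℝ)+1) := by
            have h1 : q.factorial = q * (q-1).factorial := (Nat.mul_factorial_pred (by omega)).symm
            have h2 : (p+1).factorial = (p+1) * p.factorial := Nat.factorial_succ p
            rw [h1, h2]
            push_cast
            have nzp := Nat.cast_ne_zero (R := ℝ) |>.mpr (Nat.factorial_ne_zero p)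
            have nzr := Nat.cast_ne_zero (R := ℝ) |>.mpr (Nat.factorial_ne_zero r)
            have nzq := Nat.cast_ne_zero (R := ℝ) |>.mpr (Nat.factorial_ne_zero (q-1))
            have nzq' : (q:ℝ) ≠ 0 := Nat.cast_ne_zero.mpr (by omega)
            field_simp
          generalize T1 p q r 0 ((q+0)-1) ω θ x v = T1v
          generalize T2 p q r 0 ((q+0)-1) ω θ x v = T2v
          linear_combination T1v * hc1
        · -- q ≥ 1, s ≥ 1
          rw [dif_pos (⟨by omega, by omega⟩ : ((p+1)+r = (p+r)+1 ∧ (q-1)+s = (q+s)-1)),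
            dif_pos (⟨by omega, by omega⟩ : (p+(r+1) = (p+r)+1 ∧ q+(s-1) = (q+s)-1))]
          funext x v
          simp only [Pi.add_apply, Pi.smul_apply, Pi.zero_apply, smul_eq_mul]
          rw [MAIN p q r s ((q+s)-1) (by omega) ω θ hω hθ x v,
            E1 p q r s ((q+s)-1) (by omega) (by omega) ω θ x v _ _,
            E2 p q r s ((q+s)-1) (by omega) (by omega) ω θ x v _ _]
          have hc1 : ((p.factorial * r.factorial * q.factorial * s.factorial : ℕ) : ℝ)⁻¹ * (q:ℝ)
              = (((p+1).factorial * r.factorial * (q-1).factorial * s.factorial : ℕ) : ℝ)⁻¹ * ((p:ℝ)+1) := by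
            have h1 : q.factorial = q * (q-1).factorial := (Nat.mul_factorial_pred (by omega)).symm
            have h2 : (p+1).factorial = (p+1) * p.factorial := Nat.factorial_succ p
            rw [h1, h2]
            push_cast
            have nzp := Nat.cast_ne_zero (R := ℝ) |>.mpr (Nat.factorial_ne_zero p)
            have nzr := Nat.cast_ne_zero (R := ℝ) |>.mpr (Nat.factorial_ne_zero r)
            have nzq := Nat.cast_ne_zero (R := ℝ) |>.mpr (Nat.factorial_ne_zero (q-1))
            have nzs := Nat.cast_ne_zero (R := ℝ) |>.mpr (Nat.factorial_ne_zero s)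
            have nzq' : (q:ℝ) ≠ 0 := Nat.cast_ne_zero.mpr (by omega)
            field_simp
          have hc2 : ((p.factorial * r.factorial * q.factorial * s.factorial : ℕ) : ℝ)⁻¹ * (s:ℝ)
              = ((p.factorial * (r+1).factorial * q.factorial * (s-1).factorial : ℕ) : ℝ)⁻¹ * ((r:ℝ)+1) := by
            have h1 : s.factorial = s * (s-1).factorial := (Nat.mul_factorial_pred (by omega)).symm
            have h2 : (r+1).factorial = (r+1) * r.factorial := Nat.factorial_succ r
            rw [h1, h2]
            push_cast
            have nzp := Nat.cast_ne_zero (R := ℝ) |>.mpr (Nat.factorial_ne_zero p)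
            have nzr := Nat.cast_ne_zero (R := ℝ) |>.mpr (Nat.factorial_ne_zero r)
            have nzq := Nat.cast_ne_zero (R := ℝ) |>.mpr (Nat.factorial_ne_zero q)
            have nzs := Nat.cast_ne_zero (R := ℝ) |>.mpr (Nat.factorial_ne_zero (s-1))
            have nzs' : (s:ℝ) ≠ 0 := Nat.cast_ne_zero.mpr (by omega)
            field_simp
          generalize T1 p q r s ((q+s)-1) ω θ x v = T1v
          generalize T2 p q r s ((q+s)-1) ω θ x v = T2v
          linear_combination T1v * hc1 + (T2v * (-1:ℝ)^q) * hc2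
            - (T2v * (-1:ℝ)^q * ((p.factorial * (r+1).factorial * q.factorial * (s-1).factorial : ℕ) : ℝ)⁻¹ * ((r:ℝ)+1)) * neg_one_pow_cancel p
    · simp only [emb]
      rw [dif_neg hL]
      have hterm1 : (if h : (p+1)+r = p' ∧ (q-1)+s = q'
          then DFcast h.1 h.2 (mul (bianchi ω) θ) else 0) = (0 : DF n p' q') := by
        by_cases h1c : (p+1)+r = p' ∧ (q-1)+s = q'
        · have hq0 : q = 0 := by
            rcases h1c with ⟨ha, hb⟩
            by_contra hq0
            exact hL ⟨by omega, by omega⟩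
          subst hq0
          rw [dif_pos h1c, show bianchi ω = (0 : DF n (p+1) (0-1)) from rfl,
            mul_zero_left, DFcast_zero]
        · rw [dif_neg h1c]
      have hterm2 : (if h : p+(r+1) = p' ∧ q+(s-1) = q'
          then DFcast h.1 h.2 (mul ω (bianchi θ)) else 0) = (0 : DF n p' q') := by
        by_cases h2c : p+(r+1) = p' ∧ q+(s-1) = q'
        · have hs0 : s = 0 := by
            rcases h2c with ⟨ha, hb⟩
            by_contra hs0
            exact hL ⟨by omega, by omega⟩
          subst hs0
          rw [dif_pos h2c, show bianchi θ = (0 : DF n (r+1) (0-1)) from rfl,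
            mul_zero_right, DFcast_zero]
        · rw [dif_neg h2c]
      rw [hterm1, hterm2]
      funext x v
      simp only [Pi.add_apply, Pi.smul_apply, Pi.zero_apply, smul_eq_mul]
      ring
  refine ⟨HP, fun hBω hBθ => ?_⟩
  have h := congrFun (congrFun HP ((p + r) + 1)) ((q + s) - 1)
  rw [emb_apply_self] at h
  rw [hBω, hBθ, mul_zero_left, mul_zero_right] at h
  rw [h]
  simp only [Pi.add_apply, Pi.smul_apply]
  rw [emb_zero_apply, emb_zero_apply]
  funext x v
  simp only [Pi.add_apply, Pi.smul_apply, Pi.zero_apply, smul_eq_mul]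
  ring

end DoubleForm
end

section
/- For every 0 ≤ k ≤ n, the double Hodge star satisfies *(g^k/k!) = g^{n−k}/(n−k)!. -/
open scoped BigOperators

namespace DoubleForm

/-! ### Auxiliary machinery -/

/-- The sign of a permutation, as a real number. -/
noncomputable def sg {α : Type*} [DecidableEq α] [Fintype α] (σ : Equiv.Perm α) : ℝ :=
  ((Equiv.Perm.sign σ : ℤ) : ℝ)

lemma sg_mul {α : Type*} [DecidableEq α] [Fintype α] (σ τ : Equiv.Perm α) :
    sg (σ * τ) = sg σ * sg τ := by simp [sg]

lemma sg_inv {α : Type*} [DecidableEq α] [Fintype α] (σ : Equiv.Perm α) :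
    sg σ⁻¹ = sg σ := by simp [sg]

lemma sg_sq {α : Type*} [DecidableEq α] [Fintype α] (σ : Equiv.Perm α) :
    sg σ * sg σ = 1 := by simp [sg, ← Int.cast_mul, ← Units.val_mul]

lemma det_as_sg {k : ℕ} (M : Matrix (Fin k) (Fin k) ℝ) :
    M.det = ∑ τ : Equiv.Perm (Fin k), sg τ * ∏ i, M (τ i) i := by
  rw [Matrix.det_apply']; rfl

/-- A variant of `rowsDet` with the dimension of the complement as a parameter. -/
noncomputable def mD {n : ℕ} (k : ℕ) {m : ℕ} (h : k + m = n) (g : Fin k → Fin n)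
    (x : Fin m → V n) : ℝ :=
  Matrix.det (Matrix.of fun i c : Fin n =>
    if hi : (i : ℕ) < k then E n (g ⟨(i : ℕ), hi⟩) c
    else x ⟨(i : ℕ) - k, by have := i.isLt; omega⟩ c)

lemma rowsDet_eq_mD {n k : ℕ} (h : k + (n - k) = n) (g : Fin k → Fin n)
    (x : Fin (n - k) → V n) : rowsDet k g x = mD k h g x := rfl

lemma mD_perm {n k m : ℕ} (h : k + m = n) (g : Fin k → Fin n) (τ : Equiv.Perm (Fin k))
    (x : Fin m → V n) :
    mD k h (g ∘ τ) x = sg τ * mD k h g x := by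
  classical
  set e : Fin k ⊕ Fin m ≃ Fin n := finSumFinEquiv.trans (finCongr h) with he
  have he1 : ∀ a : Fin k, ((e (Sum.inl a) : Fin n) : ℕ) = (a : ℕ) := by
    intro a; simp [he]
  have he2 : ∀ j : Fin m, ((e (Sum.inr j) : Fin n) : ℕ) = k + (j : ℕ) := by
    intro j; simp [he]
  set τh : Equiv.Perm (Fin n) := e.permCongr (Equiv.sumCongr τ (Equiv.refl (Fin m))) with hτh
  have hsign : sg τh = sg τ := by
    simp [sg, hτh, Equiv.Perm.sign_permCongr, Equiv.Perm.sign_sumCongr]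
  have hM : (Matrix.of fun i c : Fin n =>
      if hi : (i : ℕ) < k then E n ((g ∘ τ) ⟨(i : ℕ), hi⟩) c
      else x ⟨(i : ℕ) - k, by have := i.isLt; omega⟩ c)
      = (Matrix.of fun i c : Fin n =>
      if hi : (i : ℕ) < k then E n (g ⟨(i : ℕ), hi⟩) c
      else x ⟨(i : ℕ) - k, by have := i.isLt; omega⟩ c).submatrix τh id := by
    ext i c
    rcases hs : e.symm i with a | j
    · have hi : i = e (Sum.inl a) := by rw [← hs]; simp
      have hiv : (i : ℕ) = (a : ℕ) := by rw [hi]; exact he1 a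
      have hik : (i : ℕ) < k := by rw [hiv]; exact a.isLt
      have hτhi : τh i = e (Sum.inl (τ a)) := by
        simp [hτh, Equiv.permCongr_apply, hs]
      have hτv : ((τh i : Fin n) : ℕ) = ((τ a : Fin k) : ℕ) := by rw [hτhi]; exact he1 _
      have hτk : ((τh i : Fin n) : ℕ) < k := by rw [hτv]; exact (τ a).isLt
      simp only [Matrix.of_apply, Matrix.submatrix_apply, id_eq, dif_pos hik, dif_pos hτk]
      have : (⟨(i : ℕ), hik⟩ : Fin k) = a := by ext; exact hiv
      have h2 : (⟨((τh i : Fin n) : ℕ), hτk⟩ : Fin k) = τ a := by ext; exact hτv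
      rw [this, h2]; rfl
    · have hi : i = e (Sum.inr j) := by rw [← hs]; simp
      have hiv : (i : ℕ) = k + (j : ℕ) := by rw [hi]; exact he2 j
      have hik : ¬ (i : ℕ) < k := by omega
      have hτhi : τh i = i := by
        simp only [hτh, Equiv.permCongr_apply, hs, Equiv.sumCongr_apply, Sum.map_inr,
          Equiv.refl_apply]
        rw [hi]
      simp only [Matrix.of_apply, Matrix.submatrix_apply, id_eq, hτhi, dif_neg hik]
  rw [mD, hM, Matrix.det_permute, ← hsign]
  simp [mD, sg]

lemma key1 (l : ℕ) (G : Matrix (Fin (l+1)) (Fin (l+1)) ℝ) :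
    ∑ σ : Equiv.Perm (Fin (l+1)), ∑ ρ : Equiv.Perm (Fin (l+1)),
      sg σ * sg ρ * (Matrix.of fun i j : Fin l =>
        G (σ (Fin.castAdd 1 i)) (ρ (Fin.castAdd 1 j))).det *
        G (σ (Fin.natAdd l 0)) (ρ (Fin.natAdd l 0))
    = ((l+1).factorial : ℝ) * (l.factorial : ℝ) * G.det := by
  classical
  have step1 : ∀ σ ρ : Equiv.Perm (Fin (l+1)),
      sg σ * sg ρ * (Matrix.of fun i j : Fin l =>
        G (σ (Fin.castAdd 1 i)) (ρ (Fin.castAdd 1 j))).det *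
        G (σ (Fin.natAdd l 0)) (ρ (Fin.natAdd l 0))
      = ∑ τ : Equiv.Perm (Fin l), sg σ * sg ρ * sg τ *
          (∏ i, G (σ (Fin.castAdd 1 (τ i))) (ρ (Fin.castAdd 1 i))) *
          G (σ (Fin.natAdd l 0)) (ρ (Fin.natAdd l 0)) := by
    intro σ ρ
    rw [det_as_sg, Finset.mul_sum, Finset.sum_mul]
    refine Finset.sum_congr rfl fun τ _ => ?_
    simp only [Matrix.of_apply]
    ring
  simp only [step1]
  rw [Finset.sum_comm]
  have step2 : ∀ ρ : Equiv.Perm (Fin (l+1)),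
      ∑ σ : Equiv.Perm (Fin (l+1)), ∑ τ : Equiv.Perm (Fin l),
        sg σ * sg ρ * sg τ *
          (∏ i, G (σ (Fin.castAdd 1 (τ i))) (ρ (Fin.castAdd 1 i))) *
          G (σ (Fin.natAdd l 0)) (ρ (Fin.natAdd l 0))
      = ∑ τ : Equiv.Perm (Fin l), G.det := by
    intro ρ
    rw [Finset.sum_comm]
    refine Finset.sum_congr rfl fun τ _ => ?_
    set τh : Equiv.Perm (Fin (l + 1)) :=
      (finSumFinEquiv (m := l) (n := 1)).permCongr
        (Equiv.sumCongr τ (Equiv.refl (Fin 1))) with hτh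
    have hτc : ∀ i : Fin l, τh (Fin.castAdd 1 i) = Fin.castAdd 1 (τ i) := by
      intro i
      simp [hτh, Equiv.permCongr_apply, ← finSumFinEquiv_apply_left,
        finSumFinEquiv_symm_apply_castAdd]
    have hτn : τh (Fin.natAdd l 0) = Fin.natAdd l 0 := by
      rw [hτh, Equiv.permCongr_apply, ← finSumFinEquiv_apply_right, Equiv.symm_apply_apply]
      simp
    have hsτh : sg τh = sg τ := by
      simp [sg, hτh, Equiv.Perm.sign_permCongr, Equiv.Perm.sign_sumCongr]
    set μ : Equiv.Perm (Fin (l+1)) := ρ * τh⁻¹ with hμ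
    rw [← Equiv.sum_comp (Equiv.mulRight μ)
      (fun σ => sg σ * sg ρ * sg τ *
          (∏ i, G (σ (Fin.castAdd 1 (τ i))) (ρ (Fin.castAdd 1 i))) *
          G (σ (Fin.natAdd l 0)) (ρ (Fin.natAdd l 0)))]
    rw [det_as_sg]
    refine Finset.sum_congr rfl fun π _ => ?_
    have happ : ∀ i : Fin l,
        (Equiv.mulRight μ π) (Fin.castAdd 1 (τ i)) = π (ρ (Fin.castAdd 1 i)) := by
      intro i
      simp only [Equiv.coe_mulRight, Equiv.Perm.coe_mul, Function.comp_apply, hμ]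
      rw [← hτc i]
      simp
    have happ2 : (Equiv.mulRight μ π) (Fin.natAdd l 0) = π (ρ (Fin.natAdd l 0)) := by
      have hinv : τh⁻¹ (Fin.natAdd l 0) = Fin.natAdd l 0 := by
        conv_lhs => rw [← hτn]
        simp
      simp only [Equiv.coe_mulRight, Equiv.Perm.coe_mul, Function.comp_apply, hμ, hinv]
    have hsgn : sg (Equiv.mulRight μ π) = sg π * sg ρ * sg τ := by
      simp only [Equiv.coe_mulRight]
      rw [show π * μ = π * (ρ * τh⁻¹) from rfl, sg_mul, sg_mul, sg_inv, hsτh]; ring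
    have hprod : (∏ i, G (π (ρ (Fin.castAdd 1 i))) (ρ (Fin.castAdd 1 i))) *
        G (π (ρ (Fin.natAdd l 0))) (ρ (Fin.natAdd l 0))
        = ∏ z, G (π z) z := by
      rw [← Equiv.prod_comp (finSumFinEquiv.trans (ρ : Equiv (Fin (l+1)) (Fin (l+1))))
        (fun z => G (π z) z)]
      rw [Fintype.prod_sum_type]
      simp [finSumFinEquiv_apply_left, finSumFinEquiv_apply_right]
    calc sg (Equiv.mulRight μ π) * sg ρ * sg τ *
          (∏ i, G ((Equiv.mulRight μ π) (Fin.castAdd 1 (τ i))) (ρ (Fin.castAdd 1 i))) *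
          G ((Equiv.mulRight μ π) (Fin.natAdd l 0)) (ρ (Fin.natAdd l 0))
        = (sg π * ((sg ρ * sg ρ) * (sg τ * sg τ))) *
          ((∏ i, G (π (ρ (Fin.castAdd 1 i))) (ρ (Fin.castAdd 1 i))) *
            G (π (ρ (Fin.natAdd l 0))) (ρ (Fin.natAdd l 0))) := by
          simp only [hsgn, happ2]
          rw [Finset.prod_congr rfl fun i _ => by rw [happ i]]
          ring
      _ = sg π * ∏ z, G (π z) z := by rw [sg_sq, sg_sq, hprod]; ring
  rw [Finset.sum_congr rfl fun ρ _ => step2 ρ]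
  simp [Finset.card_univ, Fintype.card_perm]
  ring

lemma gpow_eq (n : ℕ) : ∀ (l : ℕ) (x y : Fin l → V n),
    gpow n l x y = (l.factorial : ℝ) *
      (Matrix.of fun i j : Fin l => ∑ c, x i c * y j c).det := by
  intro l
  induction l with
  | zero => intro x y; simp [gpow]
  | succ l ih =>
    intro x y
    show mul (gpow n l) (gm n) x y = _
    rw [mul]
    set G : Matrix (Fin (l+1)) (Fin (l+1)) ℝ :=
      Matrix.of fun a b => ∑ c, x a c * y b c with hG
    have hsum : ∀ σ ρ : Equiv.Perm (Fin (l+1)),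
        ((Equiv.Perm.sign σ : ℤ):ℝ) * ((Equiv.Perm.sign ρ : ℤ):ℝ) *
        gpow n l (fun i => x (σ (Fin.castAdd 1 i))) (fun j => y (ρ (Fin.castAdd 1 j))) *
        gm n (fun i => x (σ (Fin.natAdd l i))) (fun j => y (ρ (Fin.natAdd l j)))
        = (l.factorial : ℝ) * (sg σ * sg ρ * (Matrix.of fun i j : Fin l =>
            G (σ (Fin.castAdd 1 i)) (ρ (Fin.castAdd 1 j))).det *
            G (σ (Fin.natAdd l 0)) (ρ (Fin.natAdd l 0))) := by
      intro σ ρ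
      rw [ih]
      have hgm : gm n (fun i => x (σ (Fin.natAdd l i))) (fun j => y (ρ (Fin.natAdd l j)))
          = G (σ (Fin.natAdd l 0)) (ρ (Fin.natAdd l 0)) := rfl
      rw [hgm]
      simp only [sg, hG, Matrix.of_apply]
      ring
    simp only [hsum]
    simp only [← Finset.mul_sum]
    rw [key1]
    simp only [Nat.factorial_succ, Nat.factorial_one, mul_one]
    push_cast
    have h1 : (l.factorial : ℝ) ≠ 0 := Nat.cast_ne_zero.mpr l.factorial_ne_zero
    field_simp
    ring

/-- The cyclic permutation of `Fin n` moving the block `0,…,k` one step. -/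
def rotP (n k : ℕ) (hk : k < n) : Equiv.Perm (Fin n) where
  toFun j := ⟨if (j : ℕ) < k then (j : ℕ) + 1 else if (j : ℕ) = k then 0 else (j : ℕ),
    by have := j.isLt; split_ifs <;> omega⟩
  invFun j := ⟨if (j : ℕ) = 0 then k else if (j : ℕ) ≤ k then (j : ℕ) - 1 else (j : ℕ),
    by have := j.isLt; split_ifs <;> omega⟩
  left_inv j := by
    ext
    dsimp only
    have := j.isLt
    split_ifs <;> first | exact (‹False›).elim | omega
  right_inv j := by
    ext
    dsimp only
    have := j.isLt
    split_ifs <;> first | exact (‹False›).elim | omega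

lemma mD_cons {n k m : ℕ} (h : (k+1) + m = n) (h' : k + (m+1) = n) (hk : k < n) (c : Fin n)
    (g' : Fin k → Fin n) (x : Fin m → V n) :
    mD k h' g' (Fin.cons (E n c) x)
      = sg (rotP n k hk) * mD (k+1) h (Fin.cons c g') x := by
  classical
  set ρ := rotP n k hk with hρ
  have hM : (Matrix.of fun i col : Fin n =>
      if hi : (i : ℕ) < k then E n (g' ⟨(i : ℕ), hi⟩) col
      else (Fin.cons (E n c) x : Fin (m+1) → V n) ⟨(i : ℕ) - k, by have := i.isLt; omega⟩ col)
      = (Matrix.of fun i col : Fin n =>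
      if hi : (i : ℕ) < k + 1 then E n ((Fin.cons c g' : Fin (k+1) → Fin n) ⟨(i : ℕ), hi⟩) col
      else x ⟨(i : ℕ) - (k+1), by have := i.isLt; omega⟩ col).submatrix ρ id := by
    ext j col
    have hj := j.isLt
    have hρj : ((ρ j : Fin n) : ℕ)
        = if (j : ℕ) < k then (j : ℕ) + 1 else if (j : ℕ) = k then 0 else (j : ℕ) := by
      rw [hρ]; rfl
    rcases lt_trichotomy ((j : ℕ)) k with h1 | h1 | h1
    · have hv : ((ρ j : Fin n) : ℕ) = (j : ℕ) + 1 := by rw [hρj, if_pos h1]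
      have hlt : ((ρ j : Fin n) : ℕ) < k + 1 := by omega
      simp only [Matrix.of_apply, Matrix.submatrix_apply, id_eq, dif_pos h1, dif_pos hlt]
      have : (⟨((ρ j : Fin n) : ℕ), hlt⟩ : Fin (k+1)) = Fin.succ ⟨(j : ℕ), h1⟩ := by
        ext; simp [hv]
      rw [this, Fin.cons_succ]
    · have hv : ((ρ j : Fin n) : ℕ) = 0 := by rw [hρj, if_neg (by omega), if_pos h1]
      have hnlt : ¬ ((j : ℕ) < k) := by omega
      have hlt : ((ρ j : Fin n) : ℕ) < k + 1 := by omega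
      simp only [Matrix.of_apply, Matrix.submatrix_apply, id_eq, dif_neg hnlt, dif_pos hlt]
      have h0 : (⟨((ρ j : Fin n) : ℕ), hlt⟩ : Fin (k+1)) = 0 := by ext; simp [hv]
      have h0' : (⟨(j : ℕ) - k, by omega⟩ : Fin (m+1)) = 0 := by ext; simp; omega
      rw [h0, h0', Fin.cons_zero, Fin.cons_zero]
    · have hv : ((ρ j : Fin n) : ℕ) = (j : ℕ) := by
        rw [hρj, if_neg (by omega), if_neg (by omega)]
      have hnlt : ¬ ((j : ℕ) < k) := by omega
      have hnlt' : ¬ (((ρ j : Fin n) : ℕ) < k + 1) := by omega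
      simp only [Matrix.of_apply, Matrix.submatrix_apply, id_eq, dif_neg hnlt, dif_neg hnlt']
      have : (⟨(j : ℕ) - k, by omega⟩ : Fin (m+1))
          = Fin.succ ⟨((ρ j : Fin n) : ℕ) - (k+1), by omega⟩ := by
        ext; simp [hv]; omega
      rw [this, Fin.cons_succ]
  rw [mD, hM, Matrix.det_permute, mD]
  simp [sg]

lemma det_rank_one_update {m : ℕ} (D : Matrix (Fin m) (Fin m) ℝ) (u v : Fin m → ℝ) :
    (Matrix.of fun j l => D j l - u j * v l).det
      = D.det - ∑ j, u j * (D.updateRow j v).det := by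
  classical
  set f : (Fin m → ℝ) [⋀^Fin m]→ₗ[ℝ] ℝ := Matrix.detRowAlternating with hf
  set a : Fin m → Fin m → ℝ := D with ha
  set b : Fin m → Fin m → ℝ := fun j => (-(u j)) • v with hb
  have hM : (Matrix.of fun j l => D j l - u j * v l) = b + a := by
    ext j l
    simp [hb, ha, Pi.add_apply]
    change D j l - u j * v l = -(u j * v l) + D j l
    ring
  have hdet : (Matrix.of fun j l => D j l - u j * v l).det = f (b + a) := by
    rw [hM]; rfl
  rw [hdet]
  have hexp := f.toMultilinearMap.map_add_univ b a
  have e0 : f (b + a) = f.toMultilinearMap (b + a) := rfl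
  rw [e0, hexp]
  have hbig : ∀ s : Finset (Fin m), 2 ≤ s.card → f.toMultilinearMap (s.piecewise b a) = 0 := by
    intro s hs
    obtain ⟨j₁, hj₁, j₂, hj₂, hne⟩ := Finset.one_lt_card.mp (show 1 < s.card by omega)
    set g : Fin m → Fin m → ℝ := s.piecewise b a with hg
    have hgj₁ : g j₁ = (-(u j₁)) • v := by
      rw [hg, Finset.piecewise_eq_of_mem _ _ _ hj₁]
    have hgj₂ : g j₂ = (-(u j₂)) • v := by
      rw [hg, Finset.piecewise_eq_of_mem _ _ _ hj₂]
    have e1 : f.toMultilinearMap g = f g := rfl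
    rw [e1, ← Function.update_eq_self j₁ g, hgj₁, f.map_update_smul]
    have h2 : Function.update g j₁ v j₂ = (-(u j₂)) • v := by
      rw [Function.update_of_ne hne.symm, hgj₂]
    rw [← Function.update_eq_self j₂ (Function.update g j₁ v), h2, f.map_update_smul]
    rw [f.map_eq_zero_of_eq _ (i := j₁) (j := j₂) ?_ hne]
    · simp
    · rw [Function.update_of_ne hne, Function.update_self, Function.update_self]
  have hsub : (Finset.univ : Finset (Finset (Fin m))).filter (fun s => s.card ≤ 1)
      = insert (∅ : Finset (Fin m)) (Finset.univ.image fun j : Fin m => {j}) := by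
    ext s
    constructor
    · intro hs
      have hcard := (Finset.mem_filter.mp hs).2
      rcases s.eq_empty_or_nonempty with h | ⟨a, ha⟩
      · rw [h]; exact Finset.mem_insert_self _ _
      · apply Finset.mem_insert_of_mem
        apply Finset.mem_image.mpr
        exact ⟨a, Finset.mem_univ a, (Finset.eq_singleton_iff_unique_mem.mpr
          ⟨ha, fun b hb => Finset.card_le_one.mp hcard b hb a ha⟩).symm⟩
    · intro hs
      apply Finset.mem_filter.mpr
      refine ⟨Finset.mem_univ _, ?_⟩
      rcases Finset.mem_insert.mp hs with h | h
      · simp [h]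
      · rcases Finset.mem_image.mp h with ⟨a, -, h2⟩
        rw [← h2]
        simp
  have hzero : ∀ s ∈ (Finset.univ : Finset (Finset (Fin m))),
      f.toMultilinearMap (s.piecewise b a) ≠ 0 → s.card ≤ 1 := by
    intro s _ hns
    by_contra hc
    exact hns (hbig s (by omega))
  rw [← Finset.sum_filter_of_ne hzero]
  have hinj : ∀ a ∈ (Finset.univ : Finset (Fin m)), ∀ b ∈ Finset.univ,
      ({a} : Finset (Fin m)) = {b} → a = b := by
    intro a _ b _ hab
    exact Finset.singleton_injective hab
  rw [hsub, Finset.sum_insert (by simp), Finset.sum_image hinj]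
  have hempty : f.toMultilinearMap ((∅ : Finset (Fin m)).piecewise b a) = D.det := by
    rw [Finset.piecewise_empty]; rfl
  have hsingle : ∀ j : Fin m, f.toMultilinearMap (({j} : Finset (Fin m)).piecewise b a)
      = -(u j * (D.updateRow j v).det) := by
    intro j
    rw [Finset.piecewise_singleton]
    have hbj : b j = (-(u j)) • v := rfl
    rw [hbj]
    have e1 : f.toMultilinearMap (Function.update a j ((-(u j)) • v))
        = f (Function.update a j ((-(u j)) • v)) := rfl
    rw [e1, f.map_update_smul]
    have e2 : f (Function.update a j v) = (D.updateRow j v).det := rfl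
    rw [e2]
    simp
  rw [hempty, Finset.sum_congr rfl (fun j _ => hsingle j)]
  simp [Finset.sum_neg_distrib]
  ring

lemma sum_E_mul {n : ℕ} (w : V n) (c : Fin n) : ∑ d, E n c d * w d = w c := by
  have : ∀ d, E n c d * w d = if d = c then w d else 0 := by
    intro d
    by_cases hd : d = c <;> simp [E, hd]
  rw [Finset.sum_congr rfl fun d _ => this d, Finset.sum_ite_eq' Finset.univ c w]
  simp

lemma sum_mul_E {n : ℕ} (w : V n) (c : Fin n) : ∑ d, w d * E n c d = w c := by
  rw [← sum_E_mul w c]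
  exact Finset.sum_congr rfl fun d _ => by ring

lemma sum_det_cons {n m : ℕ} (x y : Fin m → V n) :
    ∑ c : Fin n, (Matrix.of fun i j : Fin (m+1) =>
        ∑ d, (Fin.cons (E n c) x : Fin (m+1) → V n) i d *
          (Fin.cons (E n c) y : Fin (m+1) → V n) j d).det
    = ((n : ℝ) - m) * (Matrix.of fun i j : Fin m => ∑ d, x i d * y j d).det := by
  classical
  set D : Matrix (Fin m) (Fin m) ℝ := Matrix.of fun i j => ∑ d, x i d * y j d with hD
  set e1 : Fin 1 ⊕ Fin m ≃ Fin (m+1) := finSumFinEquiv.trans (finCongr (by omega)) with he1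
  have he1l : ∀ a : Fin 1, e1 (Sum.inl a) = 0 := by
    intro a
    have ha : (a : ℕ) = 0 := by omega
    ext
    simp only [he1, Equiv.trans_apply, finSumFinEquiv_apply_left, finCongr_apply,
      Fin.coe_cast, Fin.coe_castAdd, ha]
    rfl
  have he1r : ∀ b : Fin m, e1 (Sum.inr b) = Fin.succ b := by
    intro b
    ext
    simp only [he1, Equiv.trans_apply, finSumFinEquiv_apply_right, finCongr_apply,
      Fin.coe_cast, Fin.coe_natAdd, Fin.val_succ]
    omega
  have hstep : ∀ c : Fin n, (Matrix.of fun i j : Fin (m+1) =>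
      ∑ d, (Fin.cons (E n c) x : Fin (m+1) → V n) i d *
        (Fin.cons (E n c) y : Fin (m+1) → V n) j d).det
      = D.det - ∑ j, x j c * (D.updateRow j (fun l => y l c)).det := by
    intro c
    set B : Matrix (Fin 1 ⊕ Fin m) (Fin 1 ⊕ Fin m) ℝ :=
      Matrix.fromBlocks 1 (Matrix.of fun _ l => y l c) (Matrix.of fun j _ => x j c) D with hB
    have hMB : (Matrix.of fun i j : Fin (m+1) =>
        ∑ d, (Fin.cons (E n c) x : Fin (m+1) → V n) i d *
          (Fin.cons (E n c) y : Fin (m+1) → V n) j d)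
        = B.submatrix e1.symm e1.symm := by
      ext i j
      rcases hsi : e1.symm i with a | a <;> rcases hsj : e1.symm j with b | b
      · have hi : i = 0 := by rw [← he1l a, ← hsi]; simp
        have hj : j = 0 := by rw [← he1l b, ← hsj]; simp
        subst hi; subst hj
        simp only [Matrix.of_apply, Matrix.submatrix_apply, hsi, hsj, hB,
          Matrix.fromBlocks_apply₁₁, Fin.cons_zero]
        have h2 : ∀ d, E n c d * E n c d = E n c d := by
          intro d; by_cases hd : d = c <;> simp [E, hd]
        rw [Finset.sum_congr rfl fun d _ => h2 d, Matrix.one_apply_eq]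
        unfold E; simp
      · have hi : i = 0 := by rw [← he1l a, ← hsi]; simp
        have hj : j = Fin.succ b := by rw [← he1r b, ← hsj]; simp
        subst hi; subst hj
        simp only [Matrix.of_apply, Matrix.submatrix_apply, hsi, hsj, hB,
          Matrix.fromBlocks_apply₁₂, Fin.cons_zero, Fin.cons_succ]
        exact sum_E_mul (y b) c
      · have hi : i = Fin.succ a := by rw [← he1r a, ← hsi]; simp
        have hj : j = 0 := by rw [← he1l b, ← hsj]; simp
        subst hi; subst hj
        simp only [Matrix.of_apply, Matrix.submatrix_apply, hsi, hsj, hB,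
          Matrix.fromBlocks_apply₂₁, Fin.cons_zero, Fin.cons_succ]
        exact sum_mul_E (x a) c
      · have hi : i = Fin.succ a := by rw [← he1r a, ← hsi]; simp
        have hj : j = Fin.succ b := by rw [← he1r b, ← hsj]; simp
        subst hi; subst hj
        simp only [Matrix.of_apply, Matrix.submatrix_apply, hsi, hsj, hB,
          Matrix.fromBlocks_apply₂₂, Fin.cons_succ, hD]
    rw [hMB, Matrix.det_submatrix_equiv_self, hB, Matrix.det_fromBlocks_one₁₁]
    have hsub : D - (Matrix.of fun (j : Fin m) (_ : Fin 1) => x j c) *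
          (Matrix.of fun (_ : Fin 1) (l : Fin m) => y l c)
        = Matrix.of fun j l => D j l - x j c * y l c := by
      ext j l
      simp [Matrix.mul_apply]
    rw [hsub, det_rank_one_update]
  rw [Finset.sum_congr rfl fun c _ => hstep c, Finset.sum_sub_distrib, Finset.sum_const,
    Finset.card_univ, Fintype.card_fin, Finset.sum_comm]
  have hrow : ∀ j : Fin m, ∑ c : Fin n, x j c * (D.updateRow j (fun l => y l c)).det
      = D.det := by
    intro j
    have h1 : ∀ c : Fin n, (Matrix.detRowAlternating (R := ℝ) (n := Fin m)).toMultilinearMap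
        (Function.update D j (x j c • fun l => y l c))
        = x j c * (D.updateRow j (fun l => y l c)).det := by
      intro c
      erw [MultilinearMap.map_update_smul, smul_eq_mul]
      rfl
    rw [Finset.sum_congr rfl fun c _ => (h1 c).symm]
    erw [← MultilinearMap.map_update_sum]
    have h2 : (∑ c : Fin n, x j c • fun l => y l c) = D j := by
      funext l
      simp [Finset.sum_apply, hD]
    erw [h2, Function.update_eq_self]
    rfl
  rw [Finset.sum_congr rfl fun j _ => hrow j]
  simp only [Finset.sum_const, Finset.card_univ, Fintype.card_fin, nsmul_eq_mul]
  ring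

lemma sum_mD_sq {n : ℕ} : ∀ (k m : ℕ) (h : k + m = n) (x y : Fin m → V n),
    ∑ g : Fin k → Fin n, mD k h g x * mD k h g y
      = (k.factorial : ℝ) * (Matrix.of fun i j : Fin m => ∑ c, x i c * y j c).det := by
  intro k
  induction k with
  | zero =>
    intro m h x y
    have hm : n = m := by omega
    subst hm
    haveI : Subsingleton (Fin 0 → Fin n) := ⟨fun f g => funext fun a => a.elim0⟩
    rw [Fintype.sum_subsingleton _ (fun a => a.elim0)]
    have hmd : ∀ z : Fin n → V n, mD 0 h (fun a => a.elim0) z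
        = (Matrix.of fun i c : Fin n => z i c).det := by
      intro z
      unfold mD
      congr 1
    rw [hmd x, hmd y]
    have hXY : (Matrix.of fun i j : Fin n => ∑ c, x i c * y j c)
        = (Matrix.of fun i c => x i c) * (Matrix.of fun i c => y i c).transpose := by
      ext i j
      simp [Matrix.mul_apply, Matrix.transpose_apply]
    rw [hXY, Matrix.det_mul, Matrix.det_transpose]
    simp [Nat.factorial]
  | succ k ih =>
    intro m h x y
    have h' : k + (m+1) = n := by omega
    have hk : k < n := by omega
    set e2 : (Fin n × (Fin k → Fin n)) ≃ (Fin (k+1) → Fin n) :=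
      Fin.consEquiv (fun _ : Fin (k+1) => Fin n) with he2
    have hre : ∑ g : Fin (k+1) → Fin n, mD (k+1) h g x * mD (k+1) h g y
        = ∑ p : Fin n × (Fin k → Fin n),
            mD (k+1) h (Fin.cons p.1 p.2) x * mD (k+1) h (Fin.cons p.1 p.2) y := by
      refine (Fintype.sum_equiv e2 _ _ fun p => ?_).symm
      congr 1
    rw [hre, Fintype.sum_prod_type]
    have hpt : ∀ (c : Fin n) (g' : Fin k → Fin n),
        mD (k+1) h (Fin.cons c g') x * mD (k+1) h (Fin.cons c g') y
        = mD k h' g' (Fin.cons (E n c) x) * mD k h' g' (Fin.cons (E n c) y) := by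
      intro c g'
      rw [mD_cons h h' hk c g' x, mD_cons h h' hk c g' y,
        show (sg (rotP n k hk) * mD (k+1) h (Fin.cons c g') x) *
            (sg (rotP n k hk) * mD (k+1) h (Fin.cons c g') y)
          = (sg (rotP n k hk) * sg (rotP n k hk)) *
            (mD (k+1) h (Fin.cons c g') x * mD (k+1) h (Fin.cons c g') y) from by ring,
        sg_sq, one_mul]
    calc ∑ c : Fin n, ∑ g' : Fin k → Fin n,
          mD (k+1) h (Fin.cons c g') x * mD (k+1) h (Fin.cons c g') y
        = ∑ c : Fin n, ∑ g' : Fin k → Fin n,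
          mD k h' g' (Fin.cons (E n c) x) * mD k h' g' (Fin.cons (E n c) y) := by
          exact Finset.sum_congr rfl fun c _ => Finset.sum_congr rfl fun g' _ => hpt c g'
      _ = ∑ c : Fin n, (k.factorial : ℝ) * (Matrix.of fun i j : Fin (m+1) =>
            ∑ d, (Fin.cons (E n c) x : Fin (m+1) → V n) i d *
              (Fin.cons (E n c) y : Fin (m+1) → V n) j d).det := by
          exact Finset.sum_congr rfl fun c _ => ih (m+1) h' _ _
      _ = (k.factorial : ℝ) * (((n : ℝ) - m) *
            (Matrix.of fun i j : Fin m => ∑ d, x i d * y j d).det) := by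
          rw [← Finset.mul_sum, sum_det_cons]
      _ = ((k+1).factorial : ℝ) * (Matrix.of fun i j : Fin m => ∑ d, x i d * y j d).det := by
          have hnm : (n : ℝ) - m = (k : ℝ) + 1 := by
            have hn : (n : ℝ) = (k : ℝ) + 1 + m := by push_cast [← h]; ring
            rw [hn]; ring
          rw [hnm, Nat.factorial_succ]
          push_cast
          ring


/-- for `0 ≤ k ≤ n`, `*(g^k/k!) = g^{n−k}/(n−k)!`. -/
theorem star_gpow (n k : ℕ) (hk : k ≤ n) :
    ((k.factorial : ℝ))⁻¹ • hstar (gpow n k)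
      = (((n - k).factorial : ℝ))⁻¹ • gpow n (n - k) := by
  classical
  have h : k + (n - k) = n := by omega
  funext x y
  simp only [Pi.smul_apply, smul_eq_mul]
  rw [hstar]
  simp only [rowsDet_eq_mD h]
  -- value of `gpow` on basis vectors
  have hbasis : ∀ f g : Fin k → Fin n,
      gpow n k (fun i => E n (f i)) (fun j => E n (g j))
      = (k.factorial : ℝ) *
        (Matrix.of fun i j : Fin k => if f i = g j then (1:ℝ) else 0).det := by
    intro f g
    rw [gpow_eq]
    have hmat : (Matrix.of fun i j : Fin k => ∑ c, E n (f i) c * E n (g j) c)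
        = Matrix.of fun i j : Fin k => if f i = g j then (1:ℝ) else 0 := by
      ext i j
      simp only [Matrix.of_apply]
      rw [sum_E_mul (E n (g j)) (f i)]
      rfl
    rw [hmat]
  -- the determinant of the delta matrix as a permutation sum
  have hdet : ∀ f g : Fin k → Fin n,
      (Matrix.of fun i j : Fin k => if f i = g j then (1:ℝ) else 0).det
      = ∑ τ : Equiv.Perm (Fin k), sg τ * (if f = g ∘ ⇑τ⁻¹ then (1:ℝ) else 0) := by
    intro f g
    rw [det_as_sg]
    refine Finset.sum_congr rfl fun τ _ => ?_
    congr 1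
    simp only [Matrix.of_apply]
    rw [Finset.prod_boole]
    congr 1
    apply propext
    constructor
    · intro hall
      funext i
      have := hall (τ⁻¹ i) (Finset.mem_univ _)
      simpa using this
    · intro hfg i _
      rw [hfg]
      simp
  -- collapse of the double sum over f
  have hinner : ∀ g : Fin k → Fin n,
      ∑ f : Fin k → Fin n, gpow n k (fun i => E n (f i)) (fun j => E n (g j)) *
        mD k h f x * mD k h g y
      = (k.factorial : ℝ) * (k.factorial : ℝ) * (mD k h g x * mD k h g y) := by
    intro g
    have e1 : ∀ f : Fin k → Fin n,
        gpow n k (fun i => E n (f i)) (fun j => E n (g j)) * mD k h f x * mD k h g y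
        = (k.factorial : ℝ) * ∑ τ : Equiv.Perm (Fin k),
            sg τ * ((if f = g ∘ ⇑τ⁻¹ then (1:ℝ) else 0) * (mD k h f x * mD k h g y)) := by
      intro f
      rw [hbasis, hdet, Finset.mul_sum, Finset.mul_sum, Finset.sum_mul, Finset.sum_mul]
      refine Finset.sum_congr rfl fun τ _ => ?_
      ring
    rw [Finset.sum_congr rfl fun f _ => e1 f, ← Finset.mul_sum, Finset.sum_comm]
    have e2 : ∀ τ : Equiv.Perm (Fin k),
        ∑ f : Fin k → Fin n,
          sg τ * ((if f = g ∘ ⇑τ⁻¹ then (1:ℝ) else 0) * (mD k h f x * mD k h g y))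
        = mD k h g x * mD k h g y := by
      intro τ
      have e3 : ∀ f : Fin k → Fin n,
          sg τ * ((if f = g ∘ ⇑τ⁻¹ then (1:ℝ) else 0) * (mD k h f x * mD k h g y))
          = if f = g ∘ ⇑τ⁻¹ then sg τ * (mD k h f x * mD k h g y) else 0 := by
        intro f
        by_cases hf : f = g ∘ ⇑τ⁻¹ <;> simp [hf]
      rw [Finset.sum_congr rfl fun f _ => e3 f,
        Finset.sum_ite_eq' Finset.univ (g ∘ ⇑τ⁻¹)
          (fun f => sg τ * (mD k h f x * mD k h g y))]
      simp only [Finset.mem_univ, if_pos]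
      rw [mD_perm h g τ⁻¹ x, sg_inv]
      rw [show sg τ * (sg τ * mD k h g x * mD k h g y)
          = (sg τ * sg τ) * (mD k h g x * mD k h g y) from by ring, sg_sq, one_mul]
    rw [Finset.sum_congr rfl fun τ _ => e2 τ, Finset.sum_const, Finset.card_univ,
      Fintype.card_perm, Fintype.card_fin, nsmul_eq_mul]
    ring
  rw [Finset.sum_comm, Finset.sum_congr rfl fun g _ => hinner g, ← Finset.mul_sum,
    sum_mD_sq k (n - k) h x y, gpow_eq]
  have hk0 : ((k.factorial : ℝ)) ≠ 0 := Nat.cast_ne_zero.mpr k.factorial_ne_zero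
  have hnk0 : (((n - k).factorial : ℝ)) ≠ 0 := Nat.cast_ne_zero.mpr (n - k).factorial_ne_zero
  push_cast
  field_simp

end DoubleForm
end
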